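/- arXiv:2005.11674 — 10 statements merged into one kernel-verified Lean document; each statement's English description precedes it below -/
import Mathlib

section
/- The map Ψ : Σ → S defined by Ψ(a,b) = (a/b, (1−a)/(1−b)) is well defined (its image lies in S) and is a bijection. Moreover, for (a,b) ∈ Σ and (x,y) ∈ S one has Ψ(a,b) = (x,y) if and only if a = x(1−y)/(x−y), b = (1−y)/(x−y), 1−a = y(1−x)/(y−x) and 1−b = (1−x)/(y−x); in particular, for each (a,b) ∈ Σ there exists exactly one (x,y) ∈ S satisfying these four equations. -/
open scoped Classical

noncomputable section

/-- The operation of the quasigroup `Q_{a,b}`: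
`u*v = u + a(v-u)` if `v-u` is a square, `u*v = u + b(v-u)` otherwise. -/
def qop {F : Type*} [Field F] (a b u v : F) : F :=
  if IsSquare (v - u) then u + a * (v - u) else u + b * (v - u)

/-- The set `Σ(F)` of pairs `(a,b)` with `a ≠ b`, `a,b ∉ {0,1}`, and
`ab` and `(1-a)(1-b)` both squares. -/
def SigSet (F : Type*) [Field F] : Set (F × F) :=
  {p | p.1 ≠ p.2 ∧ p.1 ≠ 0 ∧ p.1 ≠ 1 ∧ p.2 ≠ 0 ∧ p.2 ≠ 1 ∧
    IsSquare (p.1 * p.2) ∧ IsSquare ((1 - p.1) * (1 - p.2))}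

/-- `Q_{a,b}` is maximally nonassociative. -/
def MaxNA {F : Type*} [Field F] (a b : F) : Prop :=
  ∀ u v w : F, qop a b (qop a b u v) w = qop a b u (qop a b v w) → u = v ∧ v = w

/-- `σ(q)`: the number of pairs `(a,b) ∈ Σ` for which `Q_{a,b}` is
maximally nonassociative. -/
def sigmaCount (F : Type*) [Field F] : ℕ :=
  Set.ncard {p : F × F | p ∈ SigSet F ∧ MaxNA p.1 p.2}

/-- The set `S(F)` of pairs `(x,y)` of squares with `x ≠ y`, `x,y ∉ {0,1}`. -/
def SPairs (F : Type*) [Field F] : Set (F × F) :=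
  {p | IsSquare p.1 ∧ IsSquare p.2 ∧ p.1 ≠ p.2 ∧ p.1 ≠ 0 ∧ p.1 ≠ 1 ∧ p.2 ≠ 0 ∧ p.2 ≠ 1}

/-- The map `Ψ : Σ → S`, `(a,b) ↦ (a/b, (1-a)/(1-b))`. -/
def PsiMap {F : Type*} [Field F] (p : F × F) : F × F :=
  (p.1 / p.2, (1 - p.1) / (1 - p.2))

/-!
`Ψ(a, b) = (x, y)` says `a = x b` and `1 - a = y (1 - b)`, a linear system in `(a, b)` with
determinant `x - y`; solving it gives the inverse `Ψ⁻¹(x, y) = (x(1-y)/(x-y), (1-y)/(x-y))`.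
Squareness passes back and forth because `a / b = ab / b²`, while `ab = x b²` and
`(1 - a)(1 - b) = y (1 - b)²`.
-/

section

variable {F : Type*} [Field F]

def psiInv (p : F × F) : F × F :=
  (p.1 * (1 - p.2) / (p.1 - p.2), (1 - p.2) / (p.1 - p.2))

lemma isSquare_div_of_isSquare_mul {a b : F} (h : IsSquare (a * b)) : IsSquare (a / b) := by
  have hab : a / b = a * b / (b * b) := by
    rcases eq_or_ne b 0 with rfl | hb
    · simp
    · field_simp
  rw [hab]
  exact h.div (IsSquare.mul_self b)

lemma fst_psiInv_sub_snd (x y : F) :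
    (psiInv (x, y)).1 - (psiInv (x, y)).2 = (x - 1) * (1 - y) / (x - y) := by
  simp only [psiInv]
  ring

lemma one_sub_fst_psiInv {x y : F} (hxy : x ≠ y) :
    1 - (psiInv (x, y)).1 = y * (1 - x) / (y - x) := by
  have : y - x ≠ 0 := sub_ne_zero.mpr hxy.symm
  simp only [psiInv]
  field_simp
  ring

lemma one_sub_snd_psiInv {x y : F} (hxy : x ≠ y) :
    1 - (psiInv (x, y)).2 = (1 - x) / (y - x) := by
  have : y - x ≠ 0 := sub_ne_zero.mpr hxy.symm
  simp only [psiInv]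
  field_simp
  ring

lemma psiMap_mem_sPairs {p : F × F} (hp : p ∈ SigSet F) : PsiMap p ∈ SPairs F := by
  obtain ⟨hab, ha0, ha1, hb0, hb1, hsq, hsq'⟩ := hp
  have h1a : 1 - p.1 ≠ 0 := sub_ne_zero.mpr (Ne.symm ha1)
  have h1b : 1 - p.2 ≠ 0 := sub_ne_zero.mpr (Ne.symm hb1)
  refine ⟨isSquare_div_of_isSquare_mul hsq, isSquare_div_of_isSquare_mul hsq', ?_,
    div_ne_zero ha0 hb0, fun h ↦ hab ((div_eq_one_iff_eq hb0).mp h), div_ne_zero h1a h1b,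
    fun h ↦ hab (sub_right_injective ((div_eq_one_iff_eq h1b).mp h))⟩
  simp only [PsiMap]
  rw [Ne, div_eq_div_iff hb0 h1b]
  exact fun h ↦ hab (by linear_combination h)

lemma psiInv_mem_sigSet {q : F × F} (hq : q ∈ SPairs F) : psiInv q ∈ SigSet F := by
  obtain ⟨x, y⟩ := q
  obtain ⟨hsx, hsy, hxy, hx0, hx1, hy0, hy1⟩ := hq
  have hd : x - y ≠ 0 := sub_ne_zero.mpr hxy
  have h1x : 1 - x ≠ 0 := sub_ne_zero.mpr (Ne.symm hx1)
  have h1y : 1 - y ≠ 0 := sub_ne_zero.mpr (Ne.symm hy1)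
  have hd' : y - x ≠ 0 := sub_ne_zero.mpr hxy.symm
  refine ⟨?_, div_ne_zero (mul_ne_zero hx0 h1y) hd, ?_, div_ne_zero h1y hd, ?_, ?_, ?_⟩
  · rw [← sub_ne_zero, fst_psiInv_sub_snd]
    exact div_ne_zero (mul_ne_zero (sub_ne_zero.mpr hx1) h1y) hd
  · intro h
    apply div_ne_zero (mul_ne_zero hy0 h1x) hd'
    rw [← one_sub_fst_psiInv hxy, h, sub_self]
  · intro h
    apply div_ne_zero h1x hd'
    rw [← one_sub_snd_psiInv hxy, h, sub_self]
  · have h : (psiInv (x, y)).1 * (psiInv (x, y)).2 = x * ((1 - y) / (x - y)) ^ 2 := by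
      simp only [psiInv]
      ring
    rw [h]
    exact hsx.mul (IsSquare.sq _)
  · rw [one_sub_fst_psiInv hxy, one_sub_snd_psiInv hxy]
    have h : y * (1 - x) / (y - x) * ((1 - x) / (y - x)) = y * ((1 - x) / (y - x)) ^ 2 := by
      ring
    rw [h]
    exact hsy.mul (IsSquare.sq _)

lemma psiMap_eq_iff_eq_psiInv {a b x y : F} (hb0 : b ≠ 0) (hb1 : b ≠ 1) (hxy : x ≠ y) :
    PsiMap (a, b) = (x, y) ↔ (a, b) = psiInv (x, y) := by
  have h1b : 1 - b ≠ 0 := sub_ne_zero.mpr (Ne.symm hb1)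
  have hd : x - y ≠ 0 := sub_ne_zero.mpr hxy
  simp only [PsiMap, psiInv, Prod.mk.injEq]
  rw [div_eq_iff hb0, div_eq_iff h1b, eq_div_iff hd, eq_div_iff hd]
  constructor
  · rintro ⟨hx, hy⟩
    exact ⟨by linear_combination -y * hx - x * hy, by linear_combination -hx - hy⟩
  · rintro ⟨ha, hb⟩
    have hax : a = x * b := mul_right_cancel₀ hd (by linear_combination ha - x * hb)
    exact ⟨hax, by linear_combination -hb - hax⟩

lemma eq_psiInv_iff {a b x y : F} (hxy : x ≠ y) :
    (a, b) = psiInv (x, y) ↔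
      a = x * (1 - y) / (x - y) ∧ b = (1 - y) / (x - y) ∧
        1 - a = y * (1 - x) / (y - x) ∧ 1 - b = (1 - x) / (y - x) := by
  rw [← one_sub_fst_psiInv hxy, ← one_sub_snd_psiInv hxy]
  simp only [psiInv, Prod.mk.injEq]
  constructor
  · rintro ⟨rfl, rfl⟩
    exact ⟨rfl, rfl, rfl, rfl⟩
  · rintro ⟨ha, hb, -, -⟩
    exact ⟨ha, hb⟩

lemma psiMap_eq_iff {a b x y : F} (hab : (a, b) ∈ SigSet F) (hxy : (x, y) ∈ SPairs F) :
    PsiMap (a, b) = (x, y) ↔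
      a = x * (1 - y) / (x - y) ∧ b = (1 - y) / (x - y) ∧
        1 - a = y * (1 - x) / (y - x) ∧ 1 - b = (1 - x) / (y - x) :=
  (psiMap_eq_iff_eq_psiInv hab.2.2.2.1 hab.2.2.2.2.1 hxy.2.2.1).trans (eq_psiInv_iff hxy.2.2.1)

lemma invOn_psiInv_psiMap : Set.InvOn psiInv PsiMap (SigSet F) (SPairs F) := by
  refine ⟨fun p hp ↦ ?_, fun q hq ↦ ?_⟩
  · have hxy := (psiMap_mem_sPairs hp).2.2.1
    exact ((psiMap_eq_iff_eq_psiInv hp.2.2.2.1 hp.2.2.2.2.1 hxy).mp rfl).symm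
  · have hab := psiInv_mem_sigSet hq
    exact (psiMap_eq_iff_eq_psiInv hab.2.2.2.1 hab.2.2.2.2.1 hq.2.2.1).mpr rfl

end

theorem psiMap_bijection_general (F : Type*) [Field F] :
    Set.BijOn PsiMap (SigSet F) (SPairs F) ∧
    (∀ a b x y : F, (a, b) ∈ SigSet F → (x, y) ∈ SPairs F →
      (PsiMap (a, b) = (x, y) ↔
        (a = x * (1 - y) / (x - y) ∧ b = (1 - y) / (x - y) ∧
          1 - a = y * (1 - x) / (y - x) ∧ 1 - b = (1 - x) / (y - x)))) ∧
    (∀ a b : F, (a, b) ∈ SigSet F → ∃! p : F × F, p ∈ SPairs F ∧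
      a = p.1 * (1 - p.2) / (p.1 - p.2) ∧ b = (1 - p.2) / (p.1 - p.2) ∧
      1 - a = p.2 * (1 - p.1) / (p.2 - p.1) ∧ 1 - b = (1 - p.1) / (p.2 - p.1)) := by
  refine ⟨invOn_psiInv_psiMap.bijOn (fun _ ↦ psiMap_mem_sPairs) (fun _ ↦ psiInv_mem_sigSet),
    fun a b x y ↦ psiMap_eq_iff, fun a b hab ↦ ?_⟩
  have hΨ := psiMap_mem_sPairs hab
  refine ⟨PsiMap (a, b), ⟨hΨ, (psiMap_eq_iff hab hΨ).mp rfl⟩, ?_⟩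
  rintro ⟨x, y⟩ ⟨hxy, heqs⟩
  exact ((psiMap_eq_iff hab hxy).mpr heqs).symm

/-- Proposition 1.2: `Ψ : Σ → S` is a well-defined bijection, `Ψ(a,b) = (x,y)`
is equivalent to the four equations (1.4), and each `(a,b) ∈ Σ` determines a
unique `(x,y) ∈ S` satisfying them. -/
theorem psiMap_bijection (F : Type*) [Field F] [Fintype F]
    (hodd : Odd (Fintype.card F)) :
    Set.BijOn PsiMap (SigSet F) (SPairs F) ∧
    (∀ a b x y : F, (a, b) ∈ SigSet F → (x, y) ∈ SPairs F →
      (PsiMap (a, b) = (x, y) ↔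
        (a = x * (1 - y) / (x - y) ∧ b = (1 - y) / (x - y) ∧
          1 - a = y * (1 - x) / (y - x) ∧ 1 - b = (1 - x) / (y - x)))) ∧
    (∀ a b : F, (a, b) ∈ SigSet F → ∃! p : F × F, p ∈ SPairs F ∧
      a = p.1 * (1 - p.2) / (p.1 - p.2) ∧ b = (1 - p.2) / (p.1 - p.2) ∧
      1 - a = p.2 * (1 - p.1) / (p.2 - p.1) ∧ 1 - b = (1 - p.1) / (p.2 - p.1)) :=
  psiMap_bijection_general F
end
end

section
/- The sets Σ(F_q) and S(F_q) have the same cardinality, namely |Σ(F_q)| = |S(F_q)| = (q² − 8q + 15)/4. -/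
/-!
`PsiMap` is a bijection `Σ → S`: solving `a = x b` and `1 - a = y (1 - b)` for `(a, b)` gives
the inverse `(x, y) ↦ (x (1 - y) / (x - y), (1 - y) / (x - y))`, and the square conditions
correspond because `a / b = ab · b⁻²` and `(1 - a) / (1 - b) = (1 - a)(1 - b) · (1 - b)⁻²`.
`S` consists of the ordered pairs of distinct elements among the `m = (q - 3) / 2` squares other
than `0` and `1` (squaring is two-to-one on `F_qˣ`), so `|S| = m (m - 1) = (q² - 8q + 15) / 4`.
-/

open scoped Classical

noncomputable section

section Psi

variable {F : Type*} [Field F]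

theorem mapsTo_PsiMap : Set.MapsTo PsiMap (SigSet F) (SPairs F) := by
  rintro ⟨a, b⟩ ⟨hab, ha0, ha1, hb0, hb1, hsq, hsq'⟩
  have ha1' : 1 - a ≠ 0 := sub_ne_zero.mpr (Ne.symm ha1)
  have hb1' : 1 - b ≠ 0 := sub_ne_zero.mpr (Ne.symm hb1)
  have hx : a / b = a * b * (b⁻¹) ^ 2 := by field_simp
  have hy : (1 - a) / (1 - b) = (1 - a) * (1 - b) * ((1 - b)⁻¹) ^ 2 := by field_simp
  refine ⟨?_, ?_, ?_, div_ne_zero ha0 hb0, ?_, div_ne_zero ha1' hb1', ?_⟩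
  · rw [PsiMap, hx]; exact hsq.mul (.sq _)
  · rw [PsiMap, hy]; exact hsq'.mul (.sq _)
  · intro h
    rw [PsiMap, div_eq_div_iff hb0 hb1'] at h
    exact hab (by linear_combination h)
  · exact fun h => hab ((div_eq_one_iff_eq hb0).mp h)
  · exact fun h => hab (sub_right_injective ((div_eq_one_iff_eq hb1').mp h))

theorem mapsTo_psiInv : Set.MapsTo psiInv (SPairs F) (SigSet F) := by
  rintro ⟨x, y⟩ ⟨hx, hy, hxy, hx0, hx1, hy0, hy1⟩
  have hxy' : x - y ≠ 0 := sub_ne_zero.mpr hxy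
  have hx1' : x - 1 ≠ 0 := sub_ne_zero.mpr hx1
  have hy1' : 1 - y ≠ 0 := sub_ne_zero.mpr (Ne.symm hy1)
  have hab : x * (1 - y) / (x - y) - (1 - y) / (x - y) = (x - 1) * (1 - y) / (x - y) := by ring
  have h1a : 1 - x * (1 - y) / (x - y) = y * (x - 1) / (x - y) := by field_simp; ring
  have h1b : 1 - (1 - y) / (x - y) = (x - 1) / (x - y) := by field_simp; ring
  refine ⟨?_, ?_, ?_, div_ne_zero hy1' hxy', ?_, ?_, ?_⟩
  · rw [psiInv, ← sub_ne_zero, hab]; exact div_ne_zero (mul_ne_zero hx1' hy1') hxy'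
  · exact div_ne_zero (mul_ne_zero hx0 hy1') hxy'
  · rw [psiInv, ← sub_ne_zero, ← neg_sub, neg_ne_zero, h1a]
    exact div_ne_zero (mul_ne_zero hy0 hx1') hxy'
  · rw [psiInv, ← sub_ne_zero, ← neg_sub, neg_ne_zero, h1b]; exact div_ne_zero hx1' hxy'
  · rw [psiInv, show x * (1 - y) / (x - y) * ((1 - y) / (x - y)) = x * ((1 - y) / (x - y)) ^ 2
      by ring]
    exact hx.mul (.sq _)
  · rw [psiInv, h1a, h1b, show y * (x - 1) / (x - y) * ((x - 1) / (x - y)) =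
      y * ((x - 1) / (x - y)) ^ 2 by ring]
    exact hy.mul (.sq _)

theorem leftInvOn_psiInv : Set.LeftInvOn psiInv PsiMap (SigSet F) := by
  rintro ⟨a, b⟩ ⟨hab, -, -, hb0, hb1, -⟩
  have hb1' : 1 - b ≠ 0 := sub_ne_zero.mpr (Ne.symm hb1)
  have hab' : a - b ≠ 0 := sub_ne_zero.mpr hab
  have hd : a / b - (1 - a) / (1 - b) = (a - b) / (b * (1 - b)) := by field_simp; ring
  have hn : 1 - (1 - a) / (1 - b) = (a - b) / (1 - b) := by field_simp; ring
  simp only [psiInv, PsiMap, hd, hn, Prod.mk.injEq]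
  constructor <;> field_simp

theorem rightInvOn_psiInv : Set.RightInvOn psiInv PsiMap (SPairs F) := by
  rintro ⟨x, y⟩ ⟨-, -, hxy, -, hx1, -, hy1⟩
  have hxy' : x - y ≠ 0 := sub_ne_zero.mpr hxy
  have hx1' : x - 1 ≠ 0 := sub_ne_zero.mpr hx1
  have hy1' : 1 - y ≠ 0 := sub_ne_zero.mpr (Ne.symm hy1)
  have h1a : 1 - x * (1 - y) / (x - y) = y * (x - 1) / (x - y) := by field_simp; ring
  have h1b : 1 - (1 - y) / (x - y) = (x - 1) / (x - y) := by field_simp; ring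
  simp only [psiInv, PsiMap, h1a, h1b, Prod.mk.injEq]
  constructor <;> field_simp

theorem bijOn_PsiMap : Set.BijOn PsiMap (SigSet F) (SPairs F) :=
  Set.InvOn.bijOn ⟨leftInvOn_psiInv, rightInvOn_psiInv⟩ mapsTo_PsiMap mapsTo_psiInv

end Psi

theorem SPairs_eq_offDiag (F : Type*) [Field F] :
    SPairs F = Set.offDiag {x : F | IsSquare x ∧ x ≠ 0 ∧ x ≠ 1} := by
  ext ⟨x, y⟩
  simp only [SPairs, Set.mem_offDiag, Set.mem_ofPred_eq]
  tauto

section Counting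

open Finset

variable {F : Type*} [Field F] [Fintype F]

theorem FiniteField.two_mul_card_nonzero_isSquare (hF : ringChar F ≠ 2) :
    2 * #{a : F | a ≠ 0 ∧ IsSquare a} = Fintype.card F - 1 := by
  have hfiber : ∀ b ∈ ({a : F | a ≠ 0 ∧ IsSquare a} : Finset F),
      #{x ∈ ({x : F | x ≠ 0} : Finset F) | x ^ 2 = b} = 2 := by
    intro b hb
    obtain ⟨hb0, r, rfl⟩ := (mem_filter.mp hb).2
    have hr0 : r ≠ 0 := by rintro rfl; simp at hb0
    have hfib : ({x ∈ ({x : F | x ≠ 0} : Finset F) | x ^ 2 = r * r} : Finset F) = {r, -r} := by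
      ext x
      simp only [mem_filter, mem_univ, true_and, mem_insert, mem_singleton, ← sq,
        sq_eq_sq_iff_eq_or_eq_neg]
      constructor
      · exact And.right
      · rintro (rfl | rfl) <;> simp [hr0]
    rw [hfib, card_pair (Ne.symm (mt (Ring.eq_self_iff_eq_zero_of_char_ne_two hF).mp hr0))]
  have hsq : ∀ x ∈ ({x : F | x ≠ 0} : Finset F), x ^ 2 ∈ ({a : F | a ≠ 0 ∧ IsSquare a} : Finset F) :=
    fun x hx => mem_filter.mpr ⟨mem_univ _, pow_ne_zero 2 (mem_filter.mp hx).2, .sq x⟩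
  have h := card_eq_sum_card_fiberwise hsq
  rw [sum_const_nat hfiber, filter_ne', card_erase_of_mem (mem_univ _), card_univ] at h
  omega

theorem four_mul_ncard_SPairs (hF : ringChar F ≠ 2) :
    4 * (Set.ncard (SPairs F) : ℤ) =
      (Fintype.card F : ℤ) ^ 2 - 8 * Fintype.card F + 15 := by
  set T : Finset F := {x | IsSquare x ∧ x ≠ 0 ∧ x ≠ 1}
  have hT : T = ({a : F | a ≠ 0 ∧ IsSquare a} : Finset F).erase 1 := by
    ext x; simp only [T, mem_erase, mem_filter, mem_univ, true_and]; tauto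
  have hcardT : 2 * (#T + 1) + 1 = Fintype.card F := by
    have h1 : (1 : F) ∈ ({a : F | a ≠ 0 ∧ IsSquare a} : Finset F) := by simp
    have := FiniteField.two_mul_card_nonzero_isSquare hF
    rw [hT, card_erase_of_mem h1]
    have := card_pos.mpr ⟨1, h1⟩
    omega
  have hS : Set.ncard (SPairs F) = #T * #T - #T := by
    rw [SPairs_eq_offDiag, ← coe_filter_univ, ← coe_offDiag, Set.ncard_coe_finset, offDiag_card]
  rw [hS, ← hcardT, Nat.cast_sub (Nat.le_mul_self _)]
  push_cast
  ring

end Counting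

/-- Corollary 1.3: `|Σ(F_q)| = |S(F_q)| = (q² - 8q + 15)/4`. -/
theorem card_SigSet_SSet (F : Type*) [Field F] [Fintype F] (q : ℕ)
    (hq : Fintype.card F = q) (hodd : Odd q) :
    (Set.ncard (SigSet F) : ℤ) = ((q : ℤ) ^ 2 - 8 * q + 15) / 4 ∧
      (Set.ncard (SPairs F) : ℤ) = ((q : ℤ) ^ 2 - 8 * q + 15) / 4 := by
  have hF : ringChar F ≠ 2 := fun h => by
    have := FiniteField.even_card_of_char_two h
    rw [hq, Nat.odd_iff.mp hodd] at this
    exact one_ne_zero this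
  have hS : (Set.ncard (SPairs F) : ℤ) = ((q : ℤ) ^ 2 - 8 * q + 15) / 4 := by
    rw [← hq, ← four_mul_ncard_SPairs hF, Int.mul_ediv_cancel_left _ four_ne_zero]
  exact ⟨(bijOn_PsiMap (F := F)).ncard_eq ▸ hS, hS⟩
end
end

section
/- Let (a,b) ∈ Σ and put ψ = ψ_{a,b} and let * be the operation of Q_{a,b}. Then: (1) a pair (u,v) ∈ F_q² fulfils the Associativity Equation ψ(ψ(u)−v) = ψ(−v) + ψ(u−v−ψ(−v)) if and only if v*(0*u) = (v*0)*u; (2) u − v − ψ(−v) = u − (v*0) and ψ(u) − v = (0*u) − v; (3) if (u,v) ≠ (0,0) fulfils the Associativity Equation, then none of u, v, u−v−ψ(−v) and ψ(u)−v is zero, and (c²u, c²v) fulfils the Associativity Equation for every c ∈ F_q; and (4) the quasigroup Q_{a,b} is maximally nonassociative if and only if (u,v) = (0,0) is the only solution of the Associativity Equation. -/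
open scoped Classical

noncomputable section

/-- The quadratic orthomorphism `ψ_{a,b}`. -/
def psiOrtho {F : Type*} [Field F] (a b u : F) : F :=
  if IsSquare u then a * u else b * u

/-- The Associativity Equation `ψ(ψ(u)-v) = ψ(-v) + ψ(u-v-ψ(-v))`. -/
def AssocEq {F : Type*} [Field F] (a b u v : F) : Prop :=
  psiOrtho a b (psiOrtho a b u - v) =
    psiOrtho a b (-v) + psiOrtho a b (u - v - psiOrtho a b (-v))

/-!
Since `ab` and `(a-1)(b-1)` are squares, both `ψ_{a,b}` and `ψ_{a,b} - id = ψ_{a-1,b-1}` are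
injective: `c x = d y` with `x` a square and `cd` a square forces `y = (cd) x / d²` to be a
square. Writing `u * v = u + ψ(v - u) = v + (ψ - id)(v - u)`, this makes `Q_{a,b}` an idempotent
quasigroup whose operation commutes with translations. The Associativity Equation is associativity of the
triple `(v, 0, u)` written out through `ψ`; translating an arbitrary triple `(u, v, w)` by `-v`
reduces maximal nonassociativity to it, and each degenerate solution collapses to `(0, 0)` by
cancellation and idempotency.
-/

open Function

namespace QuadraticOrtho

variable {F : Type*} [Field F]

section Orthomorphism

variable {c d : F}

theorem isSquare_of_mul_eq_mul {x y : F} (hd : d ≠ 0) (hcd : IsSquare (c * d))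
    (hx : IsSquare x) (h : c * x = d * y) : IsSquare y := by
  have hy : y = c * d * x * (d⁻¹ * d⁻¹) := by
    rw [show c * d * x = d * (c * x) by ring, h]
    field_simp
  rw [hy]
  exact (hcd.mul hx).mul (IsSquare.mul_self _)

theorem psiOrtho_injective (hc : c ≠ 0) (hd : d ≠ 0) (hcd : IsSquare (c * d)) :
    Injective (psiOrtho c d) := by
  intro x y h
  unfold psiOrtho at h
  split_ifs at h with hx hy hy
  · exact mul_left_cancel₀ hc h
  · exact absurd (isSquare_of_mul_eq_mul hd hcd hx h) hy
  · exact absurd (isSquare_of_mul_eq_mul hd hcd hy h.symm) hx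
  · exact mul_left_cancel₀ hd h

theorem psiOrtho_zero (c d : F) : psiOrtho c d 0 = 0 := by
  simp [psiOrtho]

theorem psiOrtho_sub_self (c d x : F) : psiOrtho c d x - x = psiOrtho (c - 1) (d - 1) x := by
  unfold psiOrtho
  split_ifs <;> ring

theorem psiOrtho_sq_mul (c d e x : F) : psiOrtho c d (e ^ 2 * x) = e ^ 2 * psiOrtho c d x := by
  rcases eq_or_ne e 0 with rfl | he
  · simp [psiOrtho_zero]
  have hsq : IsSquare (e ^ 2 * x) ↔ IsSquare x := by
    refine ⟨fun h => ?_, (IsSquare.sq e).mul⟩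
    have hx : x = e⁻¹ ^ 2 * (e ^ 2 * x) := by field_simp
    exact hx ▸ (IsSquare.sq _).mul h
  unfold psiOrtho
  rw [if_congr hsq rfl rfl]
  split_ifs <;> ring

end Orthomorphism

theorem psiOrtho_injective_of_mem_sigSet {a b : F} (hab : (a, b) ∈ SigSet F) :
    Injective (psiOrtho a b) :=
  psiOrtho_injective hab.2.1 hab.2.2.2.1 hab.2.2.2.2.2.1

theorem psiOrtho_sub_one_injective_of_mem_sigSet {a b : F} (hab : (a, b) ∈ SigSet F) :
    Injective (psiOrtho (a - 1) (b - 1)) := by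
  obtain ⟨-, -, ha1, -, hb1, -, hsq⟩ := hab
  refine psiOrtho_injective (sub_ne_zero.2 ha1) (sub_ne_zero.2 hb1) ?_
  rwa [show (a - 1) * (b - 1) = (1 - a) * (1 - b) by ring]

section Quasigroup

variable (a b : F)

theorem qop_eq_add_psiOrtho (u v : F) : qop a b u v = u + psiOrtho a b (v - u) := by
  unfold qop psiOrtho
  split_ifs <;> ring

theorem qop_eq_add_psiOrtho_sub_one (u v : F) :
    qop a b u v = v + psiOrtho (a - 1) (b - 1) (v - u) := by
  rw [qop_eq_add_psiOrtho, ← psiOrtho_sub_self]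
  ring

theorem zero_qop (u : F) : qop a b 0 u = psiOrtho a b u := by
  rw [qop_eq_add_psiOrtho, zero_add, sub_zero]

theorem qop_zero (v : F) : qop a b v 0 = v + psiOrtho a b (-v) := by
  rw [qop_eq_add_psiOrtho, zero_sub]

theorem qop_self (u : F) : qop a b u u = u := by
  rw [qop_eq_add_psiOrtho, sub_self, psiOrtho_zero, add_zero]

theorem qop_sub_sub (u v t : F) : qop a b (u - t) (v - t) = qop a b u v - t := by
  rw [qop_eq_add_psiOrtho, qop_eq_add_psiOrtho, sub_sub_sub_cancel_right]
  ring

variable {a b}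

theorem qop_right_injective (hψ : Injective (psiOrtho a b)) (u : F) :
    Injective (qop a b u) := fun v w h => by
  rw [qop_eq_add_psiOrtho, qop_eq_add_psiOrtho, add_right_inj] at h
  exact sub_left_injective (hψ h)

theorem qop_left_injective (hψ : Injective (psiOrtho (a - 1) (b - 1))) (v : F) :
    Injective (fun u => qop a b u v) := fun u w h => by
  simp only [qop_eq_add_psiOrtho_sub_one, add_right_inj] at h
  exact sub_right_injective (hψ h)

end Quasigroup

theorem assocEq_iff (a b u v : F) :
    AssocEq a b u v ↔ qop a b v (qop a b 0 u) = qop a b (qop a b v 0) u := by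
  rw [AssocEq, zero_qop, qop_zero, qop_eq_add_psiOrtho, qop_eq_add_psiOrtho,
    sub_sub, add_assoc, add_right_inj, sub_add_eq_sub_sub]

theorem AssocEq.sq_mul {a b u v : F} (h : AssocEq a b u v) (c : F) :
    AssocEq a b (c ^ 2 * u) (c ^ 2 * v) := by
  unfold AssocEq at h ⊢
  rw [← mul_neg, psiOrtho_sq_mul, psiOrtho_sq_mul, ← mul_sub, psiOrtho_sq_mul, ← mul_sub,
    ← mul_sub, psiOrtho_sq_mul, h, mul_add]

theorem assocEq_sub_sub_iff (a b u v w : F) :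
    AssocEq a b (w - v) (u - v) ↔ qop a b (qop a b u v) w = qop a b u (qop a b v w) := by
  have hw : qop a b 0 (w - v) = qop a b v w - v := by rw [← qop_sub_sub a b v w v, sub_self]
  have hu : qop a b (u - v) 0 = qop a b u v - v := by rw [← qop_sub_sub a b u v v, sub_self]
  rw [assocEq_iff, hw, hu, qop_sub_sub, qop_sub_sub, sub_left_inj, eq_comm]

theorem maxNA_iff (a b : F) : MaxNA a b ↔ ∀ u v : F, AssocEq a b u v → u = 0 ∧ v = 0 := by
  refine ⟨fun h u v huv => ?_, fun h u v w huvw => ?_⟩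
  · obtain ⟨hv, hu⟩ := h v 0 u ((assocEq_sub_sub_iff a b v 0 u).1 (by simpa only [sub_zero]))
    exact ⟨hu.symm, hv⟩
  · obtain ⟨hw, hu⟩ := h _ _ ((assocEq_sub_sub_iff a b u v w).2 huvw)
    exact ⟨sub_eq_zero.1 hu, (sub_eq_zero.1 hw).symm⟩

theorem eq_zero_of_qop_assoc {a b u v : F} (hψ : Injective (psiOrtho a b))
    (hψ1 : Injective (psiOrtho (a - 1) (b - 1)))
    (h : qop a b v (qop a b 0 u) = qop a b (qop a b v 0) u)
    (hdeg : u = 0 ∨ v = 0 ∨ u = qop a b v 0 ∨ v = qop a b 0 u) : u = 0 ∧ v = 0 := by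
  have hR := qop_right_injective hψ
  have hL := qop_left_injective hψ1
  have hv0 : qop a b v 0 = 0 → v = 0 := fun h0 => hL 0 (h0.trans (qop_self a b 0).symm)
  have hu0 : qop a b 0 u = 0 → u = 0 := fun h0 => hR 0 (h0.trans (qop_self a b 0).symm)
  rcases hdeg with rfl | rfl | hu | hv
  · rw [qop_self] at h
    exact ⟨rfl, hv0 (hR _ ((qop_self a b _).trans h))⟩
  · rw [qop_self] at h
    exact ⟨hu0 (hL _ (h.trans (qop_self a b _).symm)).symm, rfl⟩
  · rw [← hu, qop_self] at h
    have hu' : u = 0 := hu0 (hR v (h.trans hu))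
    exact ⟨hu', hv0 (hu.symm.trans hu')⟩
  · rw [← hv, qop_self] at h
    have hv' : v = 0 := hv0 (hL u (h.symm.trans hv))
    exact ⟨hu0 (hv.symm.trans hv'), hv'⟩

end QuadraticOrtho

open QuadraticOrtho in
theorem assocEq_properties_general (F : Type*) [Field F] (a b : F) (hab : (a, b) ∈ SigSet F) :
    (∀ u v : F, AssocEq a b u v ↔
      qop a b v (qop a b 0 u) = qop a b (qop a b v 0) u) ∧
    (∀ u v : F, u - v - psiOrtho a b (-v) = u - qop a b v 0 ∧
      psiOrtho a b u - v = qop a b 0 u - v) ∧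
    (∀ u v : F, (u, v) ≠ (0, 0) → AssocEq a b u v →
      (u ≠ 0 ∧ v ≠ 0 ∧ u - v - psiOrtho a b (-v) ≠ 0 ∧ psiOrtho a b u - v ≠ 0) ∧
      ∀ c : F, AssocEq a b (c ^ 2 * u) (c ^ 2 * v)) ∧
    (MaxNA a b ↔ ∀ u v : F, AssocEq a b u v → u = 0 ∧ v = 0) := by
  have hform : ∀ u v : F, u - v - psiOrtho a b (-v) = u - qop a b v 0 ∧
      psiOrtho a b u - v = qop a b 0 u - v := fun u v => by
    rw [qop_zero, zero_qop, sub_sub]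
    exact ⟨rfl, rfl⟩
  refine ⟨assocEq_iff a b, hform, fun u v huv h => ⟨?_, h.sq_mul⟩, maxNA_iff a b⟩
  have hnondeg : ¬(u = 0 ∨ v = 0 ∨ u = qop a b v 0 ∨ v = qop a b 0 u) := fun hdeg =>
    huv (Prod.ext_iff.2 (eq_zero_of_qop_assoc (psiOrtho_injective_of_mem_sigSet hab)
      (psiOrtho_sub_one_injective_of_mem_sigSet hab) ((assocEq_iff a b u v).1 h) hdeg))
  simp only [(hform u v).1, (hform u v).2, sub_ne_zero]
  tauto

/-- Proposition 1.4: properties of the Associativity Equation for `(a,b) ∈ Σ`. -/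
theorem assocEq_properties (F : Type*) [Field F] [Fintype F]
    (hodd : Odd (Fintype.card F)) (a b : F) (hab : (a, b) ∈ SigSet F) :
    (∀ u v : F, AssocEq a b u v ↔
      qop a b v (qop a b 0 u) = qop a b (qop a b v 0) u) ∧
    (∀ u v : F, u - v - psiOrtho a b (-v) = u - qop a b v 0 ∧
      psiOrtho a b u - v = qop a b 0 u - v) ∧
    (∀ u v : F, (u, v) ≠ (0, 0) → AssocEq a b u v →
      (u ≠ 0 ∧ v ≠ 0 ∧ u - v - psiOrtho a b (-v) ≠ 0 ∧ psiOrtho a b u - v ≠ 0) ∧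
      ∀ c : F, AssocEq a b (c ^ 2 * u) (c ^ 2 * v)) ∧
    (MaxNA a b ↔ ∀ u v : F, AssocEq a b u v → u = 0 ∧ v = 0) :=
  assocEq_properties_general F a b hab
end
end

section
/- Let (a,b) ∈ Σ and let ζ ∈ F_q be a nonsquare. Then (b,a) ∈ Σ, and the map u ↦ uζ is an isomorphism from Q_{a,b} to Q_{b,a}; that is, for all u,v ∈ F_q, (u *_{a,b} v)·ζ = (uζ) *_{b,a} (vζ), where *_{a,b} and *_{b,a} denote the operations of Q_{a,b} and Q_{b,a}. -/
open scoped Classical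

noncomputable section

lemma mul_nonsq_aux {F : Type*} [Field F] [Fintype F] (hodd : Odd (Fintype.card F))
    {x ζ : F} (hx : x ≠ 0) (hζ : ¬ IsSquare ζ) : IsSquare (x * ζ) ↔ ¬ IsSquare x := by
  have hF : ringChar F ≠ 2 := by
    intro h
    have := FiniteField.even_card_of_char_two h
    simp [Nat.even_iff, Nat.odd_iff] at this hodd; omega
  have hζ0 : ζ ≠ 0 := fun h => hζ (by simp [h])
  have hxζ : x * ζ ≠ 0 := mul_ne_zero hx hζ0
  have h1 := quadraticChar_neg_one_iff_not_isSquare.mpr hζ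
  constructor
  · intro hs hxs
    have := (quadraticChar_one_iff_isSquare hxζ).mpr hs
    rw [map_mul, (quadraticChar_one_iff_isSquare hx).mpr hxs, h1] at this
    norm_num at this
  · intro hxs
    rw [← quadraticChar_one_iff_isSquare hxζ, map_mul, h1,
      quadraticChar_neg_one_iff_not_isSquare.mpr hxs]
    ring

/-- Lemma 2.1(i): if `(a,b) ∈ Σ` and `ζ` is a nonsquare, then `(b,a) ∈ Σ` and
`u ↦ uζ` is an isomorphism `Q_{a,b} ≅ Q_{b,a}`. -/
theorem mul_nonsquare_isomorphism (F : Type*) [Field F] [Fintype F]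
    (hodd : Odd (Fintype.card F)) (a b ζ : F) (hab : (a, b) ∈ SigSet F)
    (hζ : ¬ IsSquare ζ) :
    (b, a) ∈ SigSet F ∧ ∀ u v : F, qop a b u v * ζ = qop b a (u * ζ) (v * ζ) := by
  obtain ⟨h1, h2, h3, h4, h5, h6, h7⟩ := hab
  refine ⟨⟨h1.symm, h4, h5, h2, h3, by rwa [mul_comm], by rwa [mul_comm]⟩, ?_⟩
  intro u v
  rcases eq_or_ne v u with rfl | hne
  · simp [qop]
  have hd : v - u ≠ 0 := sub_ne_zero.mpr hne
  have key : IsSquare (v * ζ - u * ζ) ↔ ¬ IsSquare (v - u) := by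
    rw [← sub_mul]; exact mul_nonsq_aux hodd hd hζ
  by_cases hs : IsSquare (v - u)
  · rw [qop, if_pos hs, qop, if_neg (by simp [key, hs])]
    ring
  · rw [qop, if_neg hs, qop, if_pos (key.mpr hs)]
    ring
end
end

section
/- Let (a,b) ∈ Σ. Then (1−a,1−b) ∈ Σ, and the opposite quasigroup of Q_{a,b} satisfies: if q ≡ 1 (mod 4) then Q_{a,b}^{op} = Q_{1−a,1−b}, i.e. v *_{a,b} u = u *_{1−a,1−b} v for all u,v ∈ F_q; and if q ≡ 3 (mod 4) then Q_{a,b}^{op} = Q_{1−b,1−a}, i.e. v *_{a,b} u = u *_{1−b,1−a} v for all u,v ∈ F_q. -/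
open scoped Classical

noncomputable section

lemma sq_neg_iff_one {F : Type*} [Field F] [Fintype F]
    (h1 : Fintype.card F % 4 = 1) (x : F) : IsSquare (-x) ↔ IsSquare x := by
  have hm1 : IsSquare (-1 : F) := FiniteField.isSquare_neg_one_iff.mpr (by omega)
  constructor
  · intro h
    simpa using hm1.mul h
  · intro h
    simpa using hm1.mul h

lemma sq_neg_iff_three {F : Type*} [Field F] [Fintype F]
    (h3 : Fintype.card F % 4 = 3) {x : F} (hx : x ≠ 0) :
    IsSquare (-x) ↔ ¬IsSquare x := by
  have hm1 : ¬IsSquare (-1 : F) := by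
    rw [FiniteField.isSquare_neg_one_iff]; simp [h3]
  have hq1 : quadraticChar F (-1) = -1 := quadraticChar_neg_one_iff_not_isSquare.mpr hm1
  constructor
  · intro h hsq
    exact hm1 (by simpa [hx] using h.mul hsq.inv)
  · intro h
    have hqx : quadraticChar F x = -1 := quadraticChar_neg_one_iff_not_isSquare.mpr h
    have : quadraticChar F (-x) = 1 := by
      rw [show (-x : F) = -1 * x by ring, map_mul, hq1, hqx]; ring
    exact (quadraticChar_one_iff_isSquare (neg_ne_zero.mpr hx)).mp this

/-- Lemma 2.1(ii): if `(a,b) ∈ Σ` then `(1-a,1-b) ∈ Σ`, and the opposite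
quasigroup of `Q_{a,b}` is `Q_{1-a,1-b}` when `q ≡ 1 (mod 4)` and
`Q_{1-b,1-a}` when `q ≡ 3 (mod 4)`. -/
theorem opposite_quasigroup (F : Type*) [Field F] [Fintype F]
    (hodd : Odd (Fintype.card F)) (a b : F) (hab : (a, b) ∈ SigSet F) :
    (1 - a, 1 - b) ∈ SigSet F ∧
    (Fintype.card F % 4 = 1 → ∀ u v : F, qop a b v u = qop (1 - a) (1 - b) u v) ∧
    (Fintype.card F % 4 = 3 → ∀ u v : F, qop a b v u = qop (1 - b) (1 - a) u v) := by
  obtain ⟨h1, h2, h3, h4, h5, h6, h7⟩ := hab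
  refine ⟨⟨?_, ?_, ?_, ?_, ?_, h7, ?_⟩, ?_, ?_⟩
  · intro h; exact h1 (by linear_combination -h)
  · exact sub_ne_zero_of_ne (Ne.symm h3)
  · intro h; exact h2 (by linear_combination -h)
  · exact sub_ne_zero_of_ne (Ne.symm h5)
  · intro h; exact h4 (by linear_combination -h)
  · rw [sub_sub_cancel, sub_sub_cancel]; exact h6
  · intro hc u v
    simp only [qop]
    rw [show v - u = -(u - v) by ring]
    by_cases hs : IsSquare (u - v)
    · rw [if_pos hs, if_pos ((sq_neg_iff_one hc _).mpr hs)]; ring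
    · rw [if_neg hs, if_neg fun h => hs ((sq_neg_iff_one hc _).mp h)]; ring
  · intro hc u v
    by_cases huv : u = v
    · subst huv; simp [qop]
    · simp only [qop]
      have hne : u - v ≠ 0 := sub_ne_zero_of_ne huv
      rw [show v - u = -(u - v) by ring]
      by_cases hs : IsSquare (u - v)
      · rw [if_pos hs, if_neg fun h => (sq_neg_iff_three hc hne).mp h hs]; ring
      · rw [if_neg hs, if_pos ((sq_neg_iff_three hc hne).mpr hs)]; ring
end
end

section
/- Both of the maps (x,y) ↦ (y,x) and (x,y) ↦ (x⁻¹,y⁻¹) permute the set S = S(F_q). Moreover, for all i,j,r,s ∈ {0,1} and all (x,y) ∈ S: (x,y) ∈ S_{ij}^{rs} if and only if (y,x) ∈ S_{ji}^{sr}, if and only if (x⁻¹,y⁻¹) ∈ S_{1−i,1−j}^{1−r,1−s}. -/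
open scoped Classical

noncomputable section

/-- The set `E(a,b)` of nonzero solutions of the Associativity Equation. -/
def ESet {F : Type*} [Field F] (a b : F) : Set (F × F) :=
  {p | p ≠ (0, 0) ∧ AssocEq a b p.1 p.2}

/-- The set `E_{ij}^{rs}(a,b)`. -/
def ESub {F : Type*} [Field F] (a b : F) (i j r s : Fin 2) : Set (F × F) :=
  {p | p ∈ ESet a b ∧ (IsSquare p.1 ↔ i = 0) ∧ (IsSquare (-p.2) ↔ j = 0) ∧
    (IsSquare (psiOrtho a b p.1 - p.2) ↔ r = 0) ∧
    (IsSquare (p.1 - p.2 - psiOrtho a b (-p.2)) ↔ s = 0)}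

/-- The set `Σ_{ij}^{rs} = {(a,b) ∈ Σ : E_{ij}^{rs}(a,b) ≠ ∅}`. -/
def SigSub (F : Type*) [Field F] (i j r s : Fin 2) : Set (F × F) :=
  {p | p ∈ SigSet F ∧ (ESub p.1 p.2 i j r s).Nonempty}

/-- The set `S_{ij}^{rs} = Ψ(Σ_{ij}^{rs})`. -/
def SSub (F : Type*) [Field F] (i j r s : Fin 2) : Set (F × F) :=
  PsiMap '' (SigSub F i j r s)

/-!
Both symmetries of `S` lift to symmetries of `Σ` that transport solutions of the Associativity
Equation. Swapping `(x, y)` corresponds to `(a, b) ↦ (1 - a, 1 - b)`: since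
`ψ_{1-a,1-b}(z) = z - ψ_{a,b}(z)`, the map `(u, v) ↦ (-v, -u)` sends `E_{ij}^{rs}(a, b)` into
`E_{ji}^{sr}(1 - a, 1 - b)`. Inverting `(x, y)` corresponds to `(a, b) ↦ (b, a)`: for a nonsquare
`c` we have `ψ_{b,a}(cz) = cψ_{a,b}(z)`, so `(u, v) ↦ (cu, cv)` sends solutions for `(a, b)` to
solutions for `(b, a)` and flips all four squareness indicators, provided the four arguments
`u, -v, ψ(u) - v, u - v - ψ(-v)` are nonzero. Only `ψ(u) ≠ v` is delicate: write `ψ(u) = αu`,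
`ψ(-v) = -βv` and `ψ(t) = γt` for `t = u - v - ψ(-v)`. If `ψ(u) = v`, the equation forces
`γ(1 - α + αβ) = αβ`; this rules out `α = γ`, yet comparing square classes shows that `u` and `t`
are both squares or both nonsquares, i.e. `α = γ`.
-/

theorem Fin.two_one_sub_eq_zero_iff (k : Fin 2) : 1 - k = 0 ↔ k ≠ 0 := by
  fin_cases k <;> decide

section Squares

variable {F : Type*} [Field F] [Fintype F]

theorem isSquare_mul_iff_of_ne_zero {x y : F} (hx : x ≠ 0) (hy : y ≠ 0) :
    IsSquare (x * y) ↔ (IsSquare x ↔ IsSquare y) := by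
  rw [← quadraticChar_one_iff_isSquare (mul_ne_zero hx hy), ← quadraticChar_one_iff_isSquare hx,
    ← quadraticChar_one_iff_isSquare hy, map_mul]
  rcases quadraticChar_dichotomy hx with h | h <;>
    rcases quadraticChar_dichotomy hy with h' | h' <;> norm_num [h, h']

theorem exists_not_isSquare_of_odd_card (hodd : Odd (Fintype.card F)) : ∃ c : F, ¬IsSquare c :=
  FiniteField.exists_nonsquare fun h ↦
    Nat.not_even_iff_odd.mpr hodd (Nat.even_iff.mpr (FiniteField.even_card_iff_char_two.mp h))

theorem isSquare_mul_iff_not_of_not_isSquare {c z : F} (hc : ¬IsSquare c) (hz : z ≠ 0) :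
    IsSquare (c * z) ↔ ¬IsSquare z := by
  have hc0 : c ≠ 0 := by rintro rfl; exact hc IsSquare.zero
  rw [isSquare_mul_iff_of_ne_zero hc0 hz]
  tauto

theorem isSquare_mul_iff_one_sub_eq_zero {c z : F} {k : Fin 2} (hc : ¬IsSquare c) (hz : z ≠ 0)
    (h : IsSquare z ↔ k = 0) : IsSquare (c * z) ↔ 1 - k = 0 := by
  rw [isSquare_mul_iff_not_of_not_isSquare hc hz, Fin.two_one_sub_eq_zero_iff, h]

end Squares

section PsiOrtho

variable {F : Type*} [Field F] {a b : F}

def psiCoef (a b z : F) : F :=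
  if IsSquare z then a else b

theorem psiOrtho_eq_psiCoef_mul (a b z : F) : psiOrtho a b z = psiCoef a b z * z := by
  unfold psiOrtho psiCoef
  split_ifs <;> rfl

theorem psiCoef_eq_or (a b z : F) : psiCoef a b z = a ∨ psiCoef a b z = b := by
  unfold psiCoef
  split_ifs <;> simp

theorem psiCoef_eq_psiCoef_iff (hab : a ≠ b) {z w : F} :
    psiCoef a b z = psiCoef a b w ↔ (IsSquare z ↔ IsSquare w) := by
  unfold psiCoef
  split_ifs <;> simp_all [Ne.symm hab]

theorem one_sub_mul_one_sub_psiCoef {z w : F} (h : psiCoef a b z ≠ psiCoef a b w) :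
    (1 - psiCoef a b z) * (1 - psiCoef a b w) = (1 - a) * (1 - b) := by
  rcases psiCoef_eq_or a b z with hz | hz <;> rcases psiCoef_eq_or a b w with hw | hw <;>
    rw [hz, hw] at h ⊢
  exacts [absurd rfl h, by ring, absurd rfl h]

theorem psiCoef_ne {c : F} (ha : a ≠ c) (hb : b ≠ c) (z : F) : psiCoef a b z ≠ c := by
  rcases psiCoef_eq_or a b z with h | h <;> rwa [h]

@[simp]
theorem psiOrtho_zero (a b : F) : psiOrtho a b 0 = 0 := by
  simp [psiOrtho]

theorem psiOrtho_eq_zero_iff (ha : a ≠ 0) (hb : b ≠ 0) {z : F} :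
    psiOrtho a b z = 0 ↔ z = 0 := by
  unfold psiOrtho
  split_ifs <;> simp [ha, hb]

theorem psiOrtho_eq_self_iff (ha : a ≠ 1) (hb : b ≠ 1) {z : F} :
    psiOrtho a b z = z ↔ z = 0 := by
  have ha' : a - 1 ≠ 0 := sub_ne_zero.mpr ha
  have hb' : b - 1 ≠ 0 := sub_ne_zero.mpr hb
  unfold psiOrtho
  split_ifs
  · rw [← sub_eq_zero, ← sub_one_mul, mul_eq_zero, or_iff_right ha']
  · rw [← sub_eq_zero, ← sub_one_mul, mul_eq_zero, or_iff_right hb']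

theorem psiOrtho_one_sub (a b z : F) : psiOrtho (1 - a) (1 - b) z = z - psiOrtho a b z := by
  unfold psiOrtho
  split_ifs <;> ring

variable [Fintype F]

theorem isSquare_psiCoef (ha : a ≠ 0) (hb : b ≠ 0) (hsq : IsSquare (a * b)) (z : F) :
    IsSquare (psiCoef a b z) ↔ IsSquare a := by
  rcases psiCoef_eq_or a b z with h | h <;> rw [h]
  exact ((isSquare_mul_iff_of_ne_zero ha hb).mp hsq).symm

theorem psiOrtho_injective (ha : a ≠ 0) (hb : b ≠ 0) (hsq : IsSquare (a * b)) :
    Function.Injective (psiOrtho a b) := by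
  intro x y h
  by_cases hx : x = 0
  · rw [hx, psiOrtho_zero, eq_comm, psiOrtho_eq_zero_iff ha hb] at h
    rw [hx, h]
  by_cases hy : y = 0
  · rw [hy, psiOrtho_zero, psiOrtho_eq_zero_iff ha hb] at h
    exact absurd h hx
  have hcoef := isSquare_psiCoef ha hb hsq
  have hclass : ∀ z ≠ (0 : F), IsSquare (psiOrtho a b z) ↔ (IsSquare a ↔ IsSquare z) := by
    intro z hz
    rw [psiOrtho_eq_psiCoef_mul, isSquare_mul_iff_of_ne_zero (psiCoef_ne ha hb z) hz, hcoef]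
  have hxy : IsSquare x ↔ IsSquare y := by
    have := (hclass x hx).symm.trans (h ▸ hclass y hy)
    tauto
  have hcoef_xy : psiCoef a b x = psiCoef a b y := by
    unfold psiCoef
    split_ifs <;> tauto
  rw [psiOrtho_eq_psiCoef_mul, psiOrtho_eq_psiCoef_mul, hcoef_xy] at h
  exact mul_left_cancel₀ (psiCoef_ne ha hb y) h

theorem psiOrtho_mul_of_not_isSquare {c : F} (hc : ¬IsSquare c) (a b z : F) :
    psiOrtho b a (c * z) = c * psiOrtho a b z := by
  by_cases hz : z = 0
  · simp [hz]
  unfold psiOrtho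
  rw [isSquare_mul_iff_not_of_not_isSquare hc hz]
  split_ifs <;> ring

end PsiOrtho

section AssocEq

variable {F : Type*} [Field F] {a b u v : F}

theorem fst_ne_zero_of_mem_ESet (hS : (a, b) ∈ SigSet F) (hE : (u, v) ∈ ESet a b) :
    u ≠ 0 := by
  obtain ⟨-, ha0, ha1, hb0, hb1, -, -⟩ := hS
  obtain ⟨hne, hAE⟩ := hE
  rintro rfl
  simp only [AssocEq, psiOrtho_zero, zero_sub, left_eq_add, psiOrtho_eq_zero_iff ha0 hb0,
    sub_eq_zero, eq_comm (a := -v), psiOrtho_eq_self_iff ha1 hb1, zero_eq_neg] at hAE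
  exact hne (by rw [hAE])

variable [Fintype F]

theorem snd_ne_zero_of_mem_ESet (hS : (a, b) ∈ SigSet F) (hE : (u, v) ∈ ESet a b) :
    v ≠ 0 := by
  obtain ⟨-, ha0, ha1, hb0, hb1, hsq, -⟩ := hS
  obtain ⟨hne, hAE⟩ := hE
  rintro rfl
  simp only [AssocEq, neg_zero, psiOrtho_zero, sub_zero, zero_add] at hAE
  rw [psiOrtho_injective ha0 hb0 hsq |>.eq_iff, psiOrtho_eq_self_iff ha1 hb1] at hAE
  exact hne (by rw [hAE])

theorem sub_sub_psiOrtho_ne_zero_of_mem_ESet (hS : (a, b) ∈ SigSet F) (hE : (u, v) ∈ ESet a b) :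
    u - v - psiOrtho a b (-v) ≠ 0 := by
  have hu := fst_ne_zero_of_mem_ESet hS hE
  obtain ⟨-, ha0, -, hb0, -, hsq, -⟩ := hS
  intro ht
  have hAE : AssocEq a b u v := hE.2
  rw [AssocEq, ht, psiOrtho_zero, add_zero, psiOrtho_injective ha0 hb0 hsq |>.eq_iff,
    sub_eq_neg_self, psiOrtho_eq_zero_iff ha0 hb0] at hAE
  exact hu hAE

theorem psiOrtho_sub_ne_zero_of_mem_ESet (hS : (a, b) ∈ SigSet F) (hE : (u, v) ∈ ESet a b) :
    psiOrtho a b u - v ≠ 0 := by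
  have hu := fst_ne_zero_of_mem_ESet hS hE
  have hv := snd_ne_zero_of_mem_ESet hS hE
  have ht := sub_sub_psiOrtho_ne_zero_of_mem_ESet hS hE
  have hAE : AssocEq a b u v := hE.2
  obtain ⟨hab, ha0, ha1, hb0, hb1, hsq, hsq1⟩ := hS
  intro hdeg
  set t := u - v - psiOrtho a b (-v) with ht_def
  set α := psiCoef a b u
  set β := psiCoef a b (-v)
  set γ := psiCoef a b t
  have hα0 : α ≠ 0 := psiCoef_ne ha0 hb0 u
  have hγ0 : γ ≠ 0 := psiCoef_ne ha0 hb0 t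
  have hαu : α * u = v := by rw [← psiOrtho_eq_psiCoef_mul]; exact sub_eq_zero.mp hdeg
  have hγt : γ * t = β * v := by
    rw [AssocEq, hdeg, psiOrtho_zero, psiOrtho_eq_psiCoef_mul a b t,
      psiOrtho_eq_psiCoef_mul a b (-v)] at hAE
    linear_combination -hAE
  set k := 1 - α + α * β
  have hαt : α * t = v * k := by
    rw [ht_def, psiOrtho_eq_psiCoef_mul]
    linear_combination hαu
  have hγk : γ * k = α * β := by
    apply mul_left_cancel₀ hv
    linear_combination α * hγt - γ * hαt
  have hαγ : α ≠ γ := by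
    intro h
    have : α * ((1 - α) * (1 - β)) = 0 := by rw [← h] at hγk; linear_combination hγk
    simp only [mul_eq_zero, sub_eq_zero] at this
    rcases this with h0 | h1 | h1
    · exact hα0 h0
    · exact psiCoef_ne ha1 hb1 u h1.symm
    · exact psiCoef_ne ha1 hb1 (-v) h1.symm
  have hk0 : k ≠ 0 := by
    rintro hk
    rw [hk, mul_zero] at hαt
    exact mul_ne_zero hα0 ht hαt
  -- `(1 - a)(1 - b) k = (1 - α)²` with `(1 - a)(1 - b)` a nonzero square
  have hk_sq : IsSquare k := by
    have hab1 : (1 - a) * (1 - b) ≠ 0 :=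
      mul_ne_zero (sub_ne_zero.mpr ha1.symm) (sub_ne_zero.mpr hb1.symm)
    have : IsSquare ((1 - a) * (1 - b) * k) := by
      rw [← one_sub_mul_one_sub_psiCoef hαγ]
      exact ⟨1 - α, by linear_combination (α - 1) * hγk⟩
    exact ((isSquare_mul_iff_of_ne_zero hab1 hk0).mp this).mp hsq1
  have hclass := isSquare_psiCoef ha0 hb0 hsq
  have hα_sq : IsSquare α := by
    have := hγk ▸ (isSquare_mul_iff_of_ne_zero hγ0 hk0)
    rw [isSquare_mul_iff_of_ne_zero hα0 (psiCoef_ne ha0 hb0 (-v)), hclass, hclass, hclass] at this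
    exact (hclass u).mpr (by tauto)
  have hut : IsSquare u ↔ IsSquare t := by
    have hv_sq := hαu ▸ isSquare_mul_iff_of_ne_zero hα0 hu
    have hvk := isSquare_mul_iff_of_ne_zero hv hk0
    rw [← hαt, isSquare_mul_iff_of_ne_zero hα0 ht] at hvk
    tauto
  exact hαγ ((psiCoef_eq_psiCoef_iff hab).mpr hut)

end AssocEq

section Transport

variable {F : Type*} [Field F] {a b : F} {i j r s : Fin 2}

theorem one_sub_mem_SigSub (h : (a, b) ∈ SigSub F i j r s) :
    (1 - a, 1 - b) ∈ SigSub F j i s r := by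
  obtain ⟨⟨hab, ha0, ha1, hb0, hb1, hsq, hsq1⟩, ⟨u, v⟩, ⟨hne, hAE⟩, hi, hj, hr, hs⟩ := h
  have hr' : psiOrtho (1 - a) (1 - b) (-v) - -u = u - v - psiOrtho a b (-v) := by
    rw [psiOrtho_one_sub]; ring
  have hs' : -v - -u - psiOrtho (1 - a) (1 - b) (-(-u)) = psiOrtho a b u - v := by
    rw [psiOrtho_one_sub, neg_neg]; ring
  refine ⟨⟨fun h ↦ hab (sub_right_injective h), sub_ne_zero.mpr (Ne.symm ha1),
      by simpa using ha0, sub_ne_zero.mpr (Ne.symm hb1), by simpa using hb0, hsq1,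
      by simpa using hsq⟩, (-v, -u), ⟨?_, ?_⟩, hj, ?_, ?_, ?_⟩ <;> try dsimp only
  · simpa [and_comm] using hne
  · unfold AssocEq at hAE ⊢
    rw [hr', hs', psiOrtho_one_sub, psiOrtho_one_sub, psiOrtho_one_sub, neg_neg]
    linear_combination hAE
  · rwa [neg_neg]
  · rwa [hr']
  · rwa [hs']

theorem swap_mem_SigSub [Fintype F] {c : F} (hc : ¬IsSquare c) (h : (a, b) ∈ SigSub F i j r s) :
    (b, a) ∈ SigSub F (1 - i) (1 - j) (1 - r) (1 - s) := by
  obtain ⟨hS, ⟨u, v⟩, hE, hi, hj, hr, hs⟩ := h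
  have hu := fst_ne_zero_of_mem_ESet hS hE
  have hv := snd_ne_zero_of_mem_ESet hS hE
  have hr0 := psiOrtho_sub_ne_zero_of_mem_ESet hS hE
  have hs0 := sub_sub_psiOrtho_ne_zero_of_mem_ESet hS hE
  obtain ⟨hab, ha0, ha1, hb0, hb1, hsq, hsq1⟩ := hS
  have hc0 : c ≠ 0 := by rintro rfl; exact hc IsSquare.zero
  have hψ := psiOrtho_mul_of_not_isSquare hc a b
  have hr' : psiOrtho b a (c * u) - c * v = c * (psiOrtho a b u - v) := by rw [hψ]; ring
  have hs' : c * u - c * v - psiOrtho b a (-(c * v)) = c * (u - v - psiOrtho a b (-v)) := by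
    rw [← mul_neg, hψ]; ring
  refine ⟨⟨Ne.symm hab, hb0, hb1, ha0, ha1, by rwa [mul_comm], by rwa [mul_comm]⟩,
    (c * u, c * v), ⟨?_, ?_⟩, isSquare_mul_iff_one_sub_eq_zero hc hu hi, ?_,
    hr' ▸ isSquare_mul_iff_one_sub_eq_zero hc hr0 hr,
    hs' ▸ isSquare_mul_iff_one_sub_eq_zero hc hs0 hs⟩
  · simp [hc0, hu]
  · have hAE := hE.2
    unfold AssocEq at hAE ⊢
    rw [hr', hs', ← mul_neg, hψ, hψ, hψ]
    linear_combination c * hAE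
  · rw [← mul_neg]
    exact isSquare_mul_iff_one_sub_eq_zero hc (neg_ne_zero.mpr hv) hj

end Transport

section SPairs

variable {F : Type*} [Field F]

theorem swap_mem_SPairs {p : F × F} (h : p ∈ SPairs F) : p.swap ∈ SPairs F :=
  let ⟨hx, hy, hxy, hx0, hx1, hy0, hy1⟩ := h
  ⟨hy, hx, Ne.symm hxy, hy0, hy1, hx0, hx1⟩

theorem inv_mem_SPairs {p : F × F} (h : p ∈ SPairs F) : p⁻¹ ∈ SPairs F :=
  let ⟨hx, hy, hxy, hx0, hx1, hy0, hy1⟩ := h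
  ⟨isSquare_inv.mpr hx, isSquare_inv.mpr hy, inv_injective.ne hxy, inv_ne_zero hx0,
    inv_ne_one.mpr hx1, inv_ne_zero hy0, inv_ne_one.mpr hy1⟩

variable {i j r s : Fin 2} {x y : F}

theorem swap_mem_SSub (h : (x, y) ∈ SSub F i j r s) : (y, x) ∈ SSub F j i s r := by
  obtain ⟨⟨a, b⟩, hp, hΨ⟩ := h
  obtain ⟨rfl, rfl⟩ := Prod.mk.inj hΨ
  exact ⟨(1 - a, 1 - b), one_sub_mem_SigSub hp, by simp [PsiMap]⟩

theorem inv_mem_SSub [Fintype F] {c : F} (hc : ¬IsSquare c) (h : (x, y) ∈ SSub F i j r s) :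
    (x⁻¹, y⁻¹) ∈ SSub F (1 - i) (1 - j) (1 - r) (1 - s) := by
  obtain ⟨⟨a, b⟩, hp, hΨ⟩ := h
  obtain ⟨rfl, rfl⟩ := Prod.mk.inj hΨ
  exact ⟨(b, a), swap_mem_SigSub hc hp, by simp [PsiMap]⟩

end SPairs

/-- Proposition 2.3: `(x,y) ↦ (y,x)` and `(x,y) ↦ (x⁻¹,y⁻¹)` permute `S`, and
`(x,y) ∈ S_{ij}^{rs}` iff `(y,x) ∈ S_{ji}^{sr}` iff
`(x⁻¹,y⁻¹) ∈ S_{1-i,1-j}^{1-r,1-s}`. -/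
theorem ssub_symmetries (F : Type*) [Field F] [Fintype F]
    (hodd : Odd (Fintype.card F)) :
    Set.BijOn (fun p : F × F => (p.2, p.1)) (SPairs F) (SPairs F) ∧
    Set.BijOn (fun p : F × F => (p.1⁻¹, p.2⁻¹)) (SPairs F) (SPairs F) ∧
    ∀ (i j r s : Fin 2) (x y : F), (x, y) ∈ SPairs F →
      (((x, y) ∈ SSub F i j r s ↔ (y, x) ∈ SSub F j i s r) ∧
       ((x, y) ∈ SSub F i j r s ↔
          (x⁻¹, y⁻¹) ∈ SSub F (1 - i) (1 - j) (1 - r) (1 - s))) := by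
  obtain ⟨c, hc⟩ := exists_not_isSquare_of_odd_card hodd
  refine ⟨?_, ?_, fun i j r s x y _ ↦
    ⟨⟨swap_mem_SSub, swap_mem_SSub⟩, ⟨inv_mem_SSub hc, ?_⟩⟩⟩
  · exact Set.InvOn.bijOn ⟨fun _ _ ↦ rfl, fun _ _ ↦ rfl⟩ (fun _ ↦ swap_mem_SPairs)
      (fun _ ↦ swap_mem_SPairs)
  · exact Set.InvOn.bijOn ⟨fun _ _ ↦ by simp, fun _ _ ↦ by simp⟩ (fun _ ↦ inv_mem_SPairs)
      (fun _ ↦ inv_mem_SPairs)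
  · intro h
    simpa only [inv_inv, sub_sub_cancel] using inv_mem_SSub hc h
end
end

section
/- Suppose −1 is a square in F_q. Then S_{01}^{00} = S_{01}^{10} = ∅. Moreover, for (x,y) ∈ S: (x,y) ∈ S_{00}^{00} if and only if (1−x)(y−x) and (1−y)(y−x) are squares; and (x,y) ∈ S_{00}^{11} if and only if (x²y + xy − x² − y²)(y−x) and (xy² + xy − x² − y²)(y−x) are nonsquares. -/
open scoped Classical

noncomputable section

/-!
On each sign pattern the Associativity Equation is linear in `(u, v)`: it reads `a u = b v` on
`E_{01}^{00}`, `u = v` on `E_{01}^{10}` and `E_{00}^{00}`, and `b (a - 1) u = a (b - 1) v` on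
`E_{00}^{11}`. As `-1` is a square, `v` and `-v` have the same square class, which rules out
`E_{01}^{00}` (there `v = ab u / b²` is a square) and `E_{01}^{10}`. In the two remaining cases a
solution can be rescaled to `u = 1`, so membership only depends on the square classes of `a` and
`a - 1`, resp. of `a - c` and `1 - c + a c` with `c = y / x`. These are transported to `(x, y)`
through `Ψ⁻¹(x, y) = (x b, b)` with `b (y - x) = y - 1`, multiplying by nonzero squares.
-/

theorem IsSquare.isSquare_mul_iff {G : Type*} [CommGroupWithZero G] {s : G} (hs : IsSquare s)
    (hs0 : s ≠ 0) (c : G) : IsSquare (s * c) ↔ IsSquare c :=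
  ⟨fun h => by simpa [inv_mul_cancel_left₀ hs0] using hs.inv.mul h, hs.mul⟩

theorem IsSquare.isSquare_iff_of_eq_mul {G : Type*} [CommGroupWithZero G] {s c d : G}
    (hs : IsSquare s) (hs0 : s ≠ 0) (h : c = s * d) : IsSquare c ↔ IsSquare d :=
  h ▸ hs.isSquare_mul_iff hs0 d

theorem isSquare_neg_iff_of_isSquare_neg_one {R : Type*} [CommRing R] (h : IsSquare (-1 : R))
    (c : R) : IsSquare (-c) ↔ IsSquare c :=
  ⟨fun hc => by simpa using h.mul hc, fun hc => by simpa using h.mul hc⟩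

section QuadraticOrthomorphism

variable {F : Type*} [Field F]

theorem psiOrtho_of_isSquare (a b : F) {u : F} (h : IsSquare u) : psiOrtho a b u = a * u :=
  if_pos h

theorem psiOrtho_of_not_isSquare (a b : F) {u : F} (h : ¬IsSquare u) : psiOrtho a b u = b * u :=
  if_neg h

section ESub

variable {a b : F}

theorem eSub_0100_eq_empty (hsq : IsSquare (-1 : F)) (hab : IsSquare (a * b)) (ha1 : a ≠ 1)
    (hb0 : b ≠ 0) : ESub a b 0 1 0 0 = ∅ := by
  refine Set.eq_empty_of_forall_notMem fun ⟨u, v⟩ ⟨⟨_, heq⟩, hu, hv, hr, hs⟩ => ?_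
  simp only [Fin.isValue, iff_true, one_ne_zero, iff_false] at hu hv hr hs
  rw [psiOrtho_of_isSquare a b hu] at hr
  rw [psiOrtho_of_not_isSquare a b hv] at hs
  rw [AssocEq, psiOrtho_of_isSquare a b hu, psiOrtho_of_not_isSquare a b hv,
    psiOrtho_of_isSquare a b hr, psiOrtho_of_isSquare a b hs] at heq
  have hauv : a * u = b * v := by
    have : (a - 1) * (a * u - b * v) = 0 := by linear_combination heq
    simpa [sub_eq_zero, ha1] using this
  have hv_eq : v = a * b * u * (b⁻¹ * b⁻¹) := by
    rw [mul_comm a b, mul_assoc b, hauv]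
    field_simp
  exact hv ((isSquare_neg_iff_of_isSquare_neg_one hsq v).mpr
    (hv_eq ▸ (hab.mul hu).mul (IsSquare.mul_self _)))

theorem eSub_0110_eq_empty (hsq : IsSquare (-1 : F)) (ha0 : a ≠ 0) (hb1 : b ≠ 1) :
    ESub a b 0 1 1 0 = ∅ := by
  refine Set.eq_empty_of_forall_notMem fun ⟨u, v⟩ ⟨⟨_, heq⟩, hu, hv, hr, hs⟩ => ?_
  simp only [Fin.isValue, iff_true, one_ne_zero, iff_false] at hu hv hr hs
  rw [psiOrtho_of_isSquare a b hu] at hr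
  rw [psiOrtho_of_not_isSquare a b hv] at hs
  rw [AssocEq, psiOrtho_of_isSquare a b hu, psiOrtho_of_not_isSquare a b hv,
    psiOrtho_of_not_isSquare a b hr, psiOrtho_of_isSquare a b hs] at heq
  have huv : u = v := by
    have : a * (b - 1) * (u - v) = 0 := by linear_combination heq
    simpa [sub_eq_zero, ha0, hb1] using this
  exact hv ((isSquare_neg_iff_of_isSquare_neg_one hsq v).mpr (huv ▸ hu))

theorem eSub_0000_nonempty_iff (hsq : IsSquare (-1 : F)) (ha0 : a ≠ 0) (ha1 : a ≠ 1) :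
    (ESub a b 0 0 0 0).Nonempty ↔ IsSquare a ∧ IsSquare (a - 1) := by
  constructor
  · rintro ⟨⟨u, v⟩, ⟨hne, heq⟩, hu, hv, hr, hs⟩
    simp only [Fin.isValue, iff_true] at hu hv hr hs
    rw [psiOrtho_of_isSquare a b hu] at hr
    rw [psiOrtho_of_isSquare a b hv] at hs
    rw [AssocEq, psiOrtho_of_isSquare a b hu, psiOrtho_of_isSquare a b hv,
      psiOrtho_of_isSquare a b hr, psiOrtho_of_isSquare a b hs] at heq
    obtain rfl : u = v := by
      have : a * (a - 1) * (u - v) = 0 := by linear_combination heq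
      simpa [sub_eq_zero, ha0, ha1] using this
    have hu0 : u ≠ 0 := by rintro rfl; exact hne rfl
    rw [show u - u - a * -u = u * a by ring] at hs
    rw [show a * u - u = u * (a - 1) by ring] at hr
    exact ⟨(hu.isSquare_mul_iff hu0 a).mp hs, (hu.isSquare_mul_iff hu0 _).mp hr⟩
  · rintro ⟨ha, ha'⟩
    have hr : psiOrtho a b 1 - 1 = a - 1 := by rw [psiOrtho_of_isSquare a b IsSquare.one]; ring
    have hs : 1 - 1 - psiOrtho a b (-1) = a := by rw [psiOrtho_of_isSquare a b hsq]; ring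
    refine ⟨(1, 1), ⟨by simp, ?_⟩, ?_⟩
    · rw [AssocEq, hr, hs, psiOrtho_of_isSquare a b ha', psiOrtho_of_isSquare a b ha,
        psiOrtho_of_isSquare a b hsq]
      ring
    · simp only [Fin.isValue, iff_true, hr, hs]
      exact ⟨IsSquare.one, hsq, ha', ha⟩

theorem eSub_0011_nonempty_iff (hsq : IsSquare (-1 : F)) (ha0 : a ≠ 0) (hb1 : b ≠ 1) {c : F}
    (hc : IsSquare c) (habc : b * (a - 1) = c * (a * (b - 1))) :
    (ESub a b 0 0 1 1).Nonempty ↔ ¬IsSquare (a - c) ∧ ¬IsSquare (1 - c + a * c) := by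
  have hab1 : a * (b - 1) ≠ 0 := mul_ne_zero ha0 (sub_ne_zero.mpr hb1)
  constructor
  · rintro ⟨⟨u, v⟩, ⟨hne, heq⟩, hu, hv, hr, hs⟩
    simp only [Fin.isValue, iff_true, one_ne_zero, iff_false] at hu hv hr hs
    rw [psiOrtho_of_isSquare a b hu] at hr
    rw [psiOrtho_of_isSquare a b hv] at hs
    rw [AssocEq, psiOrtho_of_isSquare a b hu, psiOrtho_of_isSquare a b hv,
      psiOrtho_of_not_isSquare a b hr, psiOrtho_of_not_isSquare a b hs] at heq
    obtain rfl : v = c * u := by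
      have : a * (b - 1) * (v - c * u) = 0 := by linear_combination -heq + u * habc
      simpa [sub_eq_zero, hab1] using this
    have hu0 : u ≠ 0 := by rintro rfl; exact hne (by simp)
    rw [show a * u - c * u = u * (a - c) by ring] at hr
    rw [show u - c * u - a * -(c * u) = u * (1 - c + a * c) by ring] at hs
    exact ⟨(hu.isSquare_mul_iff hu0 _).not.mp hr, (hu.isSquare_mul_iff hu0 _).not.mp hs⟩
  · rintro ⟨hr, hs⟩
    have hc' : IsSquare (-c) := (isSquare_neg_iff_of_isSquare_neg_one hsq c).mpr hc
    have hr' : psiOrtho a b 1 - c = a - c := by rw [psiOrtho_of_isSquare a b IsSquare.one]; ring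
    have hs' : 1 - c - psiOrtho a b (-c) = 1 - c + a * c := by
      rw [psiOrtho_of_isSquare a b hc']; ring
    refine ⟨(1, c), ⟨by simp, ?_⟩, ?_⟩
    · rw [AssocEq, hr', hs', psiOrtho_of_not_isSquare a b hr, psiOrtho_of_not_isSquare a b hs,
        psiOrtho_of_isSquare a b hc']
      linear_combination habc
    · simp only [Fin.isValue, iff_true, one_ne_zero, iff_false, hr', hs']
      exact ⟨IsSquare.one, hc', hr, hs⟩

end ESub

section PsiMap

variable {x y b : F}

theorem mem_sPairs_iff : (x, y) ∈ SPairs F ↔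
    IsSquare x ∧ IsSquare y ∧ x ≠ y ∧ x ≠ 0 ∧ x ≠ 1 ∧ y ≠ 0 ∧ y ≠ 1 :=
  Iff.rfl

theorem mem_sigSet_iff {a : F} : (a, b) ∈ SigSet F ↔
    a ≠ b ∧ a ≠ 0 ∧ a ≠ 1 ∧ b ≠ 0 ∧ b ≠ 1 ∧ IsSquare (a * b) ∧ IsSquare ((1 - a) * (1 - b)) :=
  Iff.rfl

theorem mem_sigSet_of_mem_sPairs (hq : (x, y) ∈ SPairs F) (hb : b * (y - x) = y - 1) :
    (x * b, b) ∈ SigSet F := by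
  obtain ⟨hx, hy, -, hx0, hx1, hy0, hy1⟩ := mem_sPairs_iff.mp hq
  have h1b : (1 - b) * (y - x) = 1 - x := by linear_combination -hb
  have h1a : 1 - x * b = y * (1 - b) := by linear_combination hb
  have hb0 : b ≠ 0 := by rintro rfl; exact hy1 (by linear_combination -hb)
  have h1b0 : 1 - b ≠ 0 := left_ne_zero_of_mul (h1b ▸ sub_ne_zero.mpr hx1.symm)
  refine mem_sigSet_iff.mpr ⟨fun h => hx1 ?_, mul_ne_zero hx0 hb0,
    fun h => mul_ne_zero hy0 h1b0 (by rw [← h1a, h, sub_self]), hb0,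
    fun h => h1b0 (sub_eq_zero.mpr h.symm), ?_, ?_⟩
  · simpa [hb0] using h
  · simpa [mul_assoc] using hx.mul (IsSquare.mul_self b)
  · simpa [h1a, mul_assoc] using hy.mul (IsSquare.mul_self (1 - b))

theorem psiMap_of_mem_sPairs (hq : (x, y) ∈ SPairs F) (hb : b * (y - x) = y - 1) :
    PsiMap (x * b, b) = (x, y) := by
  obtain ⟨-, -, -, hb0, hb1, -, -⟩ := mem_sigSet_iff.mp (mem_sigSet_of_mem_sPairs hq hb)
  have h1a : 1 - x * b = y * (1 - b) := by linear_combination hb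
  rw [PsiMap, h1a, mul_div_cancel_right₀ _ hb0, mul_div_cancel_right₀ _ (sub_ne_zero.mpr hb1.symm)]

theorem mem_sSub_iff (hq : (x, y) ∈ SPairs F) (hb : b * (y - x) = y - 1) {i j r s : Fin 2} :
    (x, y) ∈ SSub F i j r s ↔ (ESub (x * b) b i j r s).Nonempty := by
  constructor
  · rintro ⟨⟨a, b'⟩, ⟨hp, hE⟩, hpq⟩
    obtain ⟨-, -, -, hb0', hb1', -, -⟩ := mem_sigSet_iff.mp hp
    obtain ⟨hx, hy⟩ := Prod.mk.inj hpq
    have ha : a = x * b' := (div_eq_iff hb0').mp hx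
    have h1a : 1 - a = y * (1 - b') := (div_eq_iff (sub_ne_zero.mpr hb1'.symm)).mp hy
    have hb' : b' * (y - x) = y - 1 := by linear_combination h1a + ha
    obtain rfl : b' = b :=
      mul_right_cancel₀ (sub_ne_zero.mpr (mem_sPairs_iff.mp hq).2.2.1.symm) (hb'.trans hb.symm)
    rwa [← ha]
  · exact fun hE => ⟨_, ⟨mem_sigSet_of_mem_sPairs hq hb, hE⟩, psiMap_of_mem_sPairs hq hb⟩

theorem sSub_eq_empty {i j r s : Fin 2} (h : ∀ p ∈ SigSet F, ESub p.1 p.2 i j r s = ∅) :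
    SSub F i j r s = ∅ :=
  Set.image_eq_empty.mpr <| Set.eq_empty_of_forall_notMem fun p ⟨hp, hE⟩ =>
    hE.ne_empty (h p hp)

end PsiMap

section SPairs

variable {x y : F}

theorem mem_sSub_0000_iff (hsq : IsSquare (-1 : F)) (hq : (x, y) ∈ SPairs F) :
    (x, y) ∈ SSub F 0 0 0 0 ↔ IsSquare ((1 - x) * (y - x)) ∧ IsSquare ((1 - y) * (y - x)) := by
  obtain ⟨hx, hy, hxy, hx0, -, hy0, -⟩ := mem_sPairs_iff.mp hq
  have hyx : y - x ≠ 0 := sub_ne_zero.mpr hxy.symm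
  obtain ⟨b, hb⟩ : ∃ b, b * (y - x) = y - 1 := ⟨_, div_mul_cancel₀ _ hyx⟩
  obtain ⟨-, ha0, ha1, -, -, -, -⟩ := mem_sigSet_iff.mp (mem_sigSet_of_mem_sPairs hq hb)
  rw [mem_sSub_iff hq hb, eSub_0000_nonempty_iff hsq ha0 ha1, and_comm]
  refine and_congr ?_ ?_
  · refine (hsq.mul ((IsSquare.sq (y - x)).div hy)).isSquare_iff_of_eq_mul
      (by simp [hy0, hyx]) ?_ |>.symm
    field_simp
    linear_combination x * hb
  · refine (hsq.mul ((IsSquare.sq (y - x)).div hx)).isSquare_iff_of_eq_mul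
      (by simp [hx0, hyx]) ?_ |>.symm
    field_simp
    linear_combination hb

theorem mem_sSub_0011_iff (hsq : IsSquare (-1 : F)) (hq : (x, y) ∈ SPairs F) :
    (x, y) ∈ SSub F 0 0 1 1 ↔
      ¬IsSquare ((x ^ 2 * y + x * y - x ^ 2 - y ^ 2) * (y - x)) ∧
      ¬IsSquare ((x * y ^ 2 + x * y - x ^ 2 - y ^ 2) * (y - x)) := by
  obtain ⟨hx, hy, hxy, hx0, -, -, -⟩ := mem_sPairs_iff.mp hq
  have hyx : y - x ≠ 0 := sub_ne_zero.mpr hxy.symm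
  obtain ⟨b, hb⟩ : ∃ b, b * (y - x) = y - 1 := ⟨_, div_mul_cancel₀ _ hyx⟩
  obtain ⟨-, ha0, -, -, hb1, -, -⟩ := mem_sigSet_iff.mp (mem_sigSet_of_mem_sPairs hq hb)
  have habc : b * (x * b - 1) = y / x * (x * b * (b - 1)) := by
    field_simp
    linear_combination -b * hb
  have hs : IsSquare (x * (y - x) ^ 2) := hx.mul (IsSquare.sq _)
  have hs0 : x * (y - x) ^ 2 ≠ 0 := mul_ne_zero hx0 (pow_ne_zero 2 hyx)
  rw [mem_sSub_iff hq hb, eSub_0011_nonempty_iff hsq ha0 hb1 (hy.div hx) habc]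
  refine and_congr (not_congr ?_) (not_congr ?_)
  · refine (hs.isSquare_iff_of_eq_mul hs0 ?_).symm
    field_simp
    linear_combination -x ^ 2 * hb
  · refine (hs.isSquare_iff_of_eq_mul hs0 ?_).symm
    field_simp
    linear_combination -x * y * hb

end SPairs

end QuadraticOrthomorphism

theorem ssub_neg_one_square_general (F : Type*) [Field F] (hsq : IsSquare (-1 : F)) :
    SSub F 0 1 0 0 = ∅ ∧ SSub F 0 1 1 0 = ∅ ∧
    ∀ x y : F, (x, y) ∈ SPairs F →
      (((x, y) ∈ SSub F 0 0 0 0 ↔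
          IsSquare ((1 - x) * (y - x)) ∧ IsSquare ((1 - y) * (y - x))) ∧
       ((x, y) ∈ SSub F 0 0 1 1 ↔
          ¬ IsSquare ((x ^ 2 * y + x * y - x ^ 2 - y ^ 2) * (y - x)) ∧
          ¬ IsSquare ((x * y ^ 2 + x * y - x ^ 2 - y ^ 2) * (y - x)))) :=
  ⟨sSub_eq_empty fun _ ⟨_, _, ha1, hb0, _, hab, _⟩ => eSub_0100_eq_empty hsq hab ha1 hb0,
    sSub_eq_empty fun _ ⟨_, ha0, _, _, hb1, _, _⟩ => eSub_0110_eq_empty hsq ha0 hb1,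
    fun _ _ hq => ⟨mem_sSub_0000_iff hsq hq, mem_sSub_0011_iff hsq hq⟩⟩

/-- Lemma 2.4: if `-1` is a square then `S_{01}^{00} = S_{01}^{10} = ∅`, and for
`(x,y) ∈ S`: `(x,y) ∈ S_{00}^{00}` iff `(1-x)(y-x)` and `(1-y)(y-x)` are squares,
and `(x,y) ∈ S_{00}^{11}` iff `(x²y+xy-x²-y²)(y-x)` and `(xy²+xy-x²-y²)(y-x)`
are nonsquares. -/
theorem ssub_neg_one_square (F : Type*) [Field F] [Fintype F]
    (hodd : Odd (Fintype.card F)) (hsq : IsSquare (-1 : F)) :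
    SSub F 0 1 0 0 = ∅ ∧ SSub F 0 1 1 0 = ∅ ∧
    ∀ x y : F, (x, y) ∈ SPairs F →
      (((x, y) ∈ SSub F 0 0 0 0 ↔
          IsSquare ((1 - x) * (y - x)) ∧ IsSquare ((1 - y) * (y - x))) ∧
       ((x, y) ∈ SSub F 0 0 1 1 ↔
          ¬ IsSquare ((x ^ 2 * y + x * y - x ^ 2 - y ^ 2) * (y - x)) ∧
          ¬ IsSquare ((x * y ^ 2 + x * y - x ^ 2 - y ^ 2) * (y - x)))) :=
  ssub_neg_one_square_general F hsq
end
end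

section
/- Let F be a field of characteristic different from 2 and let c ∈ F satisfy conditions (3.2), (3.3) and (3.4). Then the set R(c) = {c, c+1, c−1, c/(1−c), c/(1+c), c(2−c), c²/(2c−1)} has exactly 7 elements. -/
noncomputable section

/-- The set `R(c) = {c, c+1, c-1, c/(1-c), c/(1+c), c(2-c), c²/(2c-1)}`. -/
def Rset {F : Type*} [Field F] (c : F) : Set F :=
  {c, c + 1, c - 1, c / (1 - c), c / (1 + c), c * (2 - c), c ^ 2 / (2 * c - 1)}

/-- Lemma 3.3: under conditions (3.2), (3.3) and (3.4), `|R(c)| = 7`. -/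
theorem rset_card_seven (F : Type*) [Field F] (h2 : ringChar F ≠ 2) (c : F)
    (h32 : c ≠ -1 ∧ c ≠ 0 ∧ c ≠ 1 ∧ c ≠ 1 / 2 ∧ c ≠ 2)
    (h33 : c ^ 2 + c + 1 ≠ 0 ∧ c ^ 2 + c - 1 ≠ 0 ∧ c ^ 2 - c + 1 ≠ 0 ∧
      c ^ 2 - c - 1 ≠ 0)
    (h34 : c ^ 2 - 3 * c + 1 ≠ 0) :
    Set.ncard (Rset c) = 7 := by
  classical
  obtain ⟨hm1, h0, h1, hhalf, h2'⟩ := h32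
  obtain ⟨E1, E2, E3, E4⟩ := h33
  have htwo : (2 : F) ≠ 0 := Ring.two_ne_zero h2
  have h1c : (1 : F) - c ≠ 0 := sub_ne_zero.mpr (Ne.symm h1)
  have h1pc : (1 : F) + c ≠ 0 := by intro h; exact hm1 (by linear_combination h)
  have h2c1 : 2 * c - 1 ≠ 0 := by
    intro h; apply hhalf; field_simp; linear_combination h
  have hcm1 : c - 1 ≠ 0 := sub_ne_zero.mpr h1
  have n12 : c ≠ c + 1 := by
    intro h; exact one_ne_zero (α := F) (by linear_combination -h)
  have n13 : c ≠ c - 1 := by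
    intro h; exact one_ne_zero (α := F) (by linear_combination h)
  have n14 : c ≠ c / (1 - c) := by
    intro h; rw [eq_div_iff h1c] at h
    exact mul_ne_zero h0 h0 (by linear_combination -h)
  have n15 : c ≠ c / (1 + c) := by
    intro h; rw [eq_div_iff h1pc] at h
    exact mul_ne_zero h0 h0 (by linear_combination h)
  have n16 : c ≠ c * (2 - c) := by
    intro h
    exact mul_ne_zero h0 hcm1 (by linear_combination h)
  have n17 : c ≠ c ^ 2 / (2 * c - 1) := by
    intro h; rw [eq_div_iff h2c1] at h
    exact mul_ne_zero h0 hcm1 (by linear_combination h)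
  have n23 : c + 1 ≠ c - 1 := by
    intro h; exact htwo (by linear_combination h)
  have n24 : c + 1 ≠ c / (1 - c) := by
    intro h; rw [eq_div_iff h1c] at h
    exact E2 (by linear_combination -h)
  have n25 : c + 1 ≠ c / (1 + c) := by
    intro h; rw [eq_div_iff h1pc] at h
    exact E1 (by linear_combination h)
  have n26 : c + 1 ≠ c * (2 - c) := by
    intro h; exact E3 (by linear_combination h)
  have n27 : c + 1 ≠ c ^ 2 / (2 * c - 1) := by
    intro h; rw [eq_div_iff h2c1] at h
    exact E2 (by linear_combination h)
  have n34 : c - 1 ≠ c / (1 - c) := by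
    intro h; rw [eq_div_iff h1c] at h
    exact E3 (by linear_combination -h)
  have n35 : c - 1 ≠ c / (1 + c) := by
    intro h; rw [eq_div_iff h1pc] at h
    exact E4 (by linear_combination h)
  have n36 : c - 1 ≠ c * (2 - c) := by
    intro h; exact E4 (by linear_combination h)
  have n37 : c - 1 ≠ c ^ 2 / (2 * c - 1) := by
    intro h; rw [eq_div_iff h2c1] at h
    exact h34 (by linear_combination h)
  have n45 : c / (1 - c) ≠ c / (1 + c) := by
    intro h; rw [div_eq_div_iff h1c h1pc] at h
    exact mul_ne_zero (mul_ne_zero htwo h0) h0 (by linear_combination h)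
  have n46 : c / (1 - c) ≠ c * (2 - c) := by
    intro h; rw [div_eq_iff h1c] at h
    exact mul_ne_zero h0 h34 (by linear_combination -h)
  have n47 : c / (1 - c) ≠ c ^ 2 / (2 * c - 1) := by
    intro h; rw [div_eq_div_iff h1c h2c1] at h
    exact mul_ne_zero h0 E2 (by linear_combination h)
  have n56 : c / (1 + c) ≠ c * (2 - c) := by
    intro h; rw [div_eq_iff h1pc] at h
    exact mul_ne_zero h0 E4 (by linear_combination h)
  have n57 : c / (1 + c) ≠ c ^ 2 / (2 * c - 1) := by
    intro h; rw [div_eq_div_iff h1pc h2c1] at h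
    exact mul_ne_zero h0 E3 (by linear_combination -h)
  have n67 : c * (2 - c) ≠ c ^ 2 / (2 * c - 1) := by
    intro h; rw [eq_div_iff h2c1] at h
    exact mul_ne_zero (mul_ne_zero htwo h0) (mul_ne_zero hcm1 hcm1)
      (by linear_combination -h)
  have key : Rset c = (({c, c + 1, c - 1, c / (1 - c), c / (1 + c), c * (2 - c),
      c ^ 2 / (2 * c - 1)} : Finset F) : Set F) := by
    simp [Rset]
  rw [key, Set.ncard_coe_finset]
  rw [Finset.card_insert_of_notMem (by simp [n12, n13, n14, n15, n16, n17]),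
    Finset.card_insert_of_notMem (by simp [n23, n24, n25, n26, n27]),
    Finset.card_insert_of_notMem (by simp [n34, n35, n36, n37]),
    Finset.card_insert_of_notMem (by simp [n45, n46, n47]),
    Finset.card_insert_of_notMem (by simp [n56, n57]),
    Finset.card_insert_of_notMem (by simp [n67]),
    Finset.card_singleton]
end
end

section
/- Let F be a field of characteristic different from 2 and let c ∈ F satisfy conditions (3.2), (3.3) and (3.6). Then no element of R(c) is a root of g_1(x,c) = x² + c − 2x or of g_3(x,c) = x² + c − 2xc. -/
/-! Each value `g₁(r, c)`, `g₃(r, c)` for `r ∈ R(c)` factors, up to a nonzero square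
denominator, into `c`, `c - 1` and one of the quadratics excluded by (3.3) or (3.6). -/

noncomputable section

section

variable {F : Type*} [Field F] {c : F}

def g₁ (x y : F) : F := x ^ 2 + y - 2 * x

def g₃ (x y : F) : F := x ^ 2 + y - 2 * x * y

lemma g₁_self_ne_zero (h0 : c ≠ 0) (hc1 : c - 1 ≠ 0) : g₁ c c ≠ 0 := by
  rw [show g₁ c c = c * (c - 1) by unfold g₁; ring]
  exact mul_ne_zero h0 hc1

lemma g₃_self_ne_zero (h0 : c ≠ 0) (hc1 : c - 1 ≠ 0) : g₃ c c ≠ 0 := by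
  rw [show g₃ c c = -(c * (c - 1)) by unfold g₃; ring]
  exact neg_ne_zero.mpr (mul_ne_zero h0 hc1)

lemma g₁_add_one_ne_zero (h33b : c ^ 2 + c - 1 ≠ 0) : g₁ (c + 1) c ≠ 0 := by
  rwa [show g₁ (c + 1) c = c ^ 2 + c - 1 by unfold g₁; ring]

lemma g₃_add_one_ne_zero (h33d : c ^ 2 - c - 1 ≠ 0) : g₃ (c + 1) c ≠ 0 := by
  rw [show g₃ (c + 1) c = -(c ^ 2 - c - 1) by unfold g₃; ring]
  exact neg_ne_zero.mpr h33d

lemma g₁_sub_one_ne_zero (h36a : c ^ 2 - 3 * c + 3 ≠ 0) : g₁ (c - 1) c ≠ 0 := by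
  rwa [show g₁ (c - 1) c = c ^ 2 - 3 * c + 3 by unfold g₁; ring]

lemma g₃_sub_one_ne_zero (h33d : c ^ 2 - c - 1 ≠ 0) : g₃ (c - 1) c ≠ 0 := by
  rw [show g₃ (c - 1) c = -(c ^ 2 - c - 1) by unfold g₃; ring]
  exact neg_ne_zero.mpr h33d

lemma g₁_div {p q : F} (y : F) (hq : q ≠ 0) :
    g₁ (p / q) y = (p ^ 2 + y * q ^ 2 - 2 * p * q) / q ^ 2 := by
  unfold g₁; field_simp

lemma g₃_div {p q : F} (y : F) (hq : q ≠ 0) :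
    g₃ (p / q) y = (p ^ 2 + y * q ^ 2 - 2 * p * q * y) / q ^ 2 := by
  unfold g₃; field_simp

lemma g₁_div_one_sub_ne_zero (h0 : c ≠ 0) (h1c : 1 - c ≠ 0) (h33b : c ^ 2 + c - 1 ≠ 0) :
    g₁ (c / (1 - c)) c ≠ 0 := by
  rw [g₁_div c h1c, show c ^ 2 + c * (1 - c) ^ 2 - 2 * c * (1 - c) = c * (c ^ 2 + c - 1) by ring]
  exact div_ne_zero (mul_ne_zero h0 h33b) (pow_ne_zero _ h1c)

lemma g₃_div_one_sub_ne_zero (h0 : c ≠ 0) (h1c : 1 - c ≠ 0)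
    (h36b : 3 * c ^ 2 - 3 * c + 1 ≠ 0) : g₃ (c / (1 - c)) c ≠ 0 := by
  rw [g₃_div c h1c,
    show c ^ 2 + c * (1 - c) ^ 2 - 2 * c * (1 - c) * c = c * (3 * c ^ 2 - 3 * c + 1) by ring]
  exact div_ne_zero (mul_ne_zero h0 h36b) (pow_ne_zero _ h1c)

lemma g₁_div_one_add_ne_zero (h0 : c ≠ 0) (hpc : 1 + c ≠ 0) (h33b : c ^ 2 + c - 1 ≠ 0) :
    g₁ (c / (1 + c)) c ≠ 0 := by
  rw [g₁_div c hpc, show c ^ 2 + c * (1 + c) ^ 2 - 2 * c * (1 + c) = c * (c ^ 2 + c - 1) by ring]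
  exact div_ne_zero (mul_ne_zero h0 h33b) (pow_ne_zero _ hpc)

lemma g₃_div_one_add_ne_zero (h0 : c ≠ 0) (hpc : 1 + c ≠ 0) (h33d : c ^ 2 - c - 1 ≠ 0) :
    g₃ (c / (1 + c)) c ≠ 0 := by
  rw [g₃_div c hpc,
    show c ^ 2 + c * (1 + c) ^ 2 - 2 * c * (1 + c) * c = -(c * (c ^ 2 - c - 1)) by ring]
  exact div_ne_zero (neg_ne_zero.mpr (mul_ne_zero h0 h33d)) (pow_ne_zero _ hpc)

lemma g₁_mul_two_sub_ne_zero (h0 : c ≠ 0) (hc1 : c - 1 ≠ 0)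
    (h36a : c ^ 2 - 3 * c + 3 ≠ 0) : g₁ (c * (2 - c)) c ≠ 0 := by
  rw [show g₁ (c * (2 - c)) c = c * ((c - 1) * (c ^ 2 - 3 * c + 3)) by unfold g₁; ring]
  exact mul_ne_zero h0 (mul_ne_zero hc1 h36a)

lemma g₃_mul_two_sub_ne_zero (h0 : c ≠ 0) (hc1 : c - 1 ≠ 0) (h33d : c ^ 2 - c - 1 ≠ 0) :
    g₃ (c * (2 - c)) c ≠ 0 := by
  rw [show g₃ (c * (2 - c)) c = c * ((c - 1) * (c ^ 2 - c - 1)) by unfold g₃; ring]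
  exact mul_ne_zero h0 (mul_ne_zero hc1 h33d)

lemma g₁_sq_div_ne_zero (h0 : c ≠ 0) (hc1 : c - 1 ≠ 0) (h2c1 : 2 * c - 1 ≠ 0)
    (h33b : c ^ 2 + c - 1 ≠ 0) : g₁ (c ^ 2 / (2 * c - 1)) c ≠ 0 := by
  rw [g₁_div c h2c1, show (c ^ 2) ^ 2 + c * (2 * c - 1) ^ 2 - 2 * c ^ 2 * (2 * c - 1) =
    c * ((c - 1) * (c ^ 2 + c - 1)) by ring]
  exact div_ne_zero (mul_ne_zero h0 (mul_ne_zero hc1 h33b)) (pow_ne_zero _ h2c1)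

lemma g₃_sq_div_ne_zero (h0 : c ≠ 0) (hc1 : c - 1 ≠ 0) (h2c1 : 2 * c - 1 ≠ 0)
    (h36b : 3 * c ^ 2 - 3 * c + 1 ≠ 0) : g₃ (c ^ 2 / (2 * c - 1)) c ≠ 0 := by
  rw [g₃_div c h2c1, show (c ^ 2) ^ 2 + c * (2 * c - 1) ^ 2 - 2 * c ^ 2 * (2 * c - 1) * c =
    -(c * ((c - 1) * (3 * c ^ 2 - 3 * c + 1))) by ring]
  exact div_ne_zero (neg_ne_zero.mpr (mul_ne_zero h0 (mul_ne_zero hc1 h36b)))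
    (pow_ne_zero _ h2c1)

lemma two_mul_sub_one_ne_zero (hhalf : c ≠ 1 / 2) : 2 * c - 1 ≠ 0 := by
  intro h
  refine hhalf (eq_one_div_of_mul_eq_one_left ?_)
  linear_combination h

end

theorem rset_no_root_g_general (F : Type*) [Field F] (c : F)
    (h32 : c ≠ -1 ∧ c ≠ 0 ∧ c ≠ 1 ∧ c ≠ 1 / 2 ∧ c ≠ 2)
    (h33 : c ^ 2 + c + 1 ≠ 0 ∧ c ^ 2 + c - 1 ≠ 0 ∧ c ^ 2 - c + 1 ≠ 0 ∧
      c ^ 2 - c - 1 ≠ 0)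
    (h36 : c ^ 2 - 3 * c + 3 ≠ 0 ∧ 3 * c ^ 2 - 3 * c + 1 ≠ 0) :
    ∀ x ∈ Rset c, x ^ 2 + c - 2 * x ≠ 0 ∧ x ^ 2 + c - 2 * x * c ≠ 0 := by
  obtain ⟨hm1, h0, h1, hhalf, -⟩ := h32
  obtain ⟨-, h33b, -, h33d⟩ := h33
  obtain ⟨h36a, h36b⟩ := h36
  have hc1 : c - 1 ≠ 0 := sub_ne_zero.mpr h1
  have h1c : 1 - c ≠ 0 := sub_ne_zero.mpr h1.symm
  have hpc : 1 + c ≠ 0 := fun h ↦ hm1 (by linear_combination h)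
  have h2c1 := two_mul_sub_one_ne_zero hhalf
  intro x hx
  simp only [Rset, Set.mem_insert_iff, Set.mem_singleton_iff] at hx
  change g₁ x c ≠ 0 ∧ g₃ x c ≠ 0
  rcases hx with rfl | rfl | rfl | rfl | rfl | rfl | rfl
  · exact ⟨g₁_self_ne_zero h0 hc1, g₃_self_ne_zero h0 hc1⟩
  · exact ⟨g₁_add_one_ne_zero h33b, g₃_add_one_ne_zero h33d⟩
  · exact ⟨g₁_sub_one_ne_zero h36a, g₃_sub_one_ne_zero h33d⟩
  · exact ⟨g₁_div_one_sub_ne_zero h0 h1c h33b, g₃_div_one_sub_ne_zero h0 h1c h36b⟩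
  · exact ⟨g₁_div_one_add_ne_zero h0 hpc h33b, g₃_div_one_add_ne_zero h0 hpc h33d⟩
  · exact ⟨g₁_mul_two_sub_ne_zero h0 hc1 h36a, g₃_mul_two_sub_ne_zero h0 hc1 h33d⟩
  · exact ⟨g₁_sq_div_ne_zero h0 hc1 h2c1 h33b, g₃_sq_div_ne_zero h0 hc1 h2c1 h36b⟩

/-- Lemma 3.5: under conditions (3.2), (3.3) and (3.6), no element of `R(c)` is
a root of `g₁(x,c) = x² + c - 2x` or of `g₃(x,c) = x² + c - 2xc`. -/
theorem rset_no_root_g (F : Type*) [Field F] (h2 : ringChar F ≠ 2) (c : F)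
    (h32 : c ≠ -1 ∧ c ≠ 0 ∧ c ≠ 1 ∧ c ≠ 1 / 2 ∧ c ≠ 2)
    (h33 : c ^ 2 + c + 1 ≠ 0 ∧ c ^ 2 + c - 1 ≠ 0 ∧ c ^ 2 - c + 1 ≠ 0 ∧
      c ^ 2 - c - 1 ≠ 0)
    (h36 : c ^ 2 - 3 * c + 3 ≠ 0 ∧ 3 * c ^ 2 - 3 * c + 1 ≠ 0) :
    ∀ x ∈ Rset c, x ^ 2 + c - 2 * x ≠ 0 ∧ x ^ 2 + c - 2 * x * c ≠ 0 :=
  rset_no_root_g_general F c h32 h33 h36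
end
end

section
/- Let F be a field of characteristic different from 2 and let c ∈ F satisfy conditions (3.2), (3.7) and (3.8). Then for all 1 ≤ i < j ≤ 4, the polynomials f_i(x,c) and f_j(x,c) have no common root in the algebraic closure of F. -/
open Polynomial

noncomputable section

/-- The polynomials `f₁(x,c), f₂(x,c), f₃(x,c), f₄(x,c)` in `F[x]`, where
`f₁(x,y) = x²+y²-xy-x`, `f₂(x,y) = y²+x²-xy-y`, `f₃(x,y) = y²x+xy-x²-y²` and
`f₄(x,y) = x²y+xy-x²-y²`. -/
def fPoly {F : Type*} [Field F] (c : F) : Fin 4 → Polynomial F :=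
  ![X ^ 2 + C (c ^ 2) - C c * X - X,
    C (c ^ 2) + X ^ 2 - C c * X - C c,
    C (c ^ 2) * X + C c * X - X ^ 2 - C (c ^ 2),
    C c * X ^ 2 + C c * X - X ^ 2 - C (c ^ 2)]

/-- Lemma 3.7: under conditions (3.2), (3.7) and (3.8), for all `1 ≤ i < j ≤ 4`
the polynomials `f_i(x,c)` and `f_j(x,c)` share no common root in the algebraic
closure of `F`. -/
theorem fPoly_no_common_root (F : Type*) [Field F] (h2 : ringChar F ≠ 2) (c : F)
    (h32 : c ≠ -1 ∧ c ≠ 0 ∧ c ≠ 1 ∧ c ≠ 1 / 2 ∧ c ≠ 2)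
    (h37 : c ^ 3 + c ^ 2 - 1 ≠ 0 ∧ c ^ 3 - c - 1 ≠ 0)
    (h38 : c ^ 2 + 1 ≠ 0) :
    ∀ i j : Fin 4, i < j → ∀ z : AlgebraicClosure F,
      ¬ (Polynomial.aeval z (fPoly c i) = 0 ∧ Polynomial.aeval z (fPoly c j) = 0) := by
  obtain ⟨hm1, h0, h1, _, _⟩ := h32
  have n1 : c - 1 ≠ 0 := sub_ne_zero.mpr h1
  have np1 : c + 1 ≠ 0 := fun h => hm1 (eq_neg_of_add_eq_zero_left h)
  -- the six resultants are nonzero in F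
  have hF12 : c ^ 2 - c ≠ 0 := fun h =>
    (mul_ne_zero h0 n1) (by linear_combination h)
  have hF13 : c ^ 6 - 2 * c ^ 4 + c ^ 2 ≠ 0 := fun h =>
    (mul_ne_zero (mul_ne_zero (mul_ne_zero (mul_ne_zero (mul_ne_zero h0 h0) n1) n1) np1) np1)
      (by linear_combination h)
  have hF14 : c ^ 6 - c ^ 4 - c ^ 3 + c ^ 2 ≠ 0 := fun h =>
    (mul_ne_zero (mul_ne_zero (mul_ne_zero h0 h0) n1) h37.1) (by linear_combination h)
  have hF23 : c ^ 6 - c ^ 5 - c ^ 4 + c ^ 2 ≠ 0 := fun h =>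
    (mul_ne_zero (mul_ne_zero (mul_ne_zero h0 h0) n1) h37.2) (by linear_combination h)
  have hF24 : c ^ 6 - 2 * c ^ 5 + 2 * c ^ 4 - 2 * c ^ 3 + c ^ 2 ≠ 0 := fun h =>
    (mul_ne_zero (mul_ne_zero (mul_ne_zero (mul_ne_zero h0 h0) n1) n1) h38)
      (by linear_combination h)
  have hF34 : c ^ 6 - c ^ 7 ≠ 0 := fun h =>
    (mul_ne_zero (pow_ne_zero 6 h0) (neg_ne_zero.mpr n1)) (by linear_combination h)
  intro i j hij z hz
  obtain ⟨hi, hj⟩ := hz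
  set a : AlgebraicClosure F := algebraMap F (AlgebraicClosure F) c with ha
  have hmap : ∀ p : F, p ≠ 0 → (algebraMap F (AlgebraicClosure F)) p ≠ 0 := fun p hp => by
    simpa using (map_ne_zero (algebraMap F (AlgebraicClosure F))).mpr hp
  have K12 := hmap _ hF12
  have K13 := hmap _ hF13
  have K14 := hmap _ hF14
  have K23 := hmap _ hF23
  have K24 := hmap _ hF24
  have K34 := hmap _ hF34
  simp only [map_sub, map_add, map_mul, map_pow, map_ofNat, ← ha] at K12 K13 K14 K23 K24 K34
  fin_cases i <;> fin_cases j <;>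
    [skip; skip; skip; skip; skip; skip; skip; skip; skip; skip; skip; skip; skip; skip; skip;
     skip] <;>
    first
    | exact absurd hij (by decide)
    | (simp only [fPoly] at hi hj
       norm_num [Matrix.cons_val_zero, Matrix.cons_val_one, Matrix.head_cons, Fin.mk_one,
         Matrix.cons_val_two, Matrix.tail_cons, Matrix.cons_val_three, map_add, map_sub,
         map_mul, map_pow, aeval_X, aeval_C, ← ha] at hi hj)
  · exact K12 (by linear_combination z * hi + (1 - z) * hj)
  · exact K13 (by linear_combination ((1 - a ^ 2) * z + (a ^ 4 + a ^ 3 - a ^ 2 - a)) * hi +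
      ((1 - a ^ 2) * z + (a ^ 3 + a ^ 2 - a - 1)) * hj)
  · exact K14 (by linear_combination ((a ^ 3 - 2 * a + 1) * z + (a ^ 4 + a ^ 2 - a)) * hi +
      ((1 - a - a ^ 2) * z + (2 * a ^ 2 - 1)) * hj)
  · exact K23 (by linear_combination (-(a ^ 2) * z + (a ^ 4 + a ^ 3 - a)) * hi +
      (-(a ^ 2) * z + (a ^ 3 - a)) * hj)
  · exact K24 (by linear_combination ((a ^ 3 - a ^ 2) * z + (a ^ 4 - a ^ 3 + 2 * a ^ 2 - a)) * hi +
      (-(a ^ 2) * z + (a ^ 2 - a)) * hj)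
  · exact K34 (by linear_combination ((a ^ 3 - a ^ 4) * z + (a ^ 3 - 2 * a ^ 4)) * hi +
      (-(a ^ 3) * z + (a ^ 5 + a ^ 4 - a ^ 3)) * hj)
end
end
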